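/- arXiv:1407.7787 — 8 statements merged into one kernel-verified Lean document; each statement's English description precedes it below -/
import Mathlib

section
/- Suppose the topological dynamical system (X̄,T̄) is obtained from (X,T) by halving. Then for every n ≥ 1, F_{T̄}(n) ≤ (1/2)·(F_T(n) + F_T(2n)). -/
open Function

/-- `F_T(n)`: the number of points of period `n`, i.e. of `x` with `T^[n] x = x`. -/
noncomputable def numPer {X : Type*} (T : X → X) (n : ℕ) : ℕ :=
  Nat.card {x : X // T^[n] x = x}

/-- `τ` is a closed orbit of length `n` under `T`: a set of the form
`{x, T x, …, T^[n-1] x}` of cardinality exactly `n` with `T^[n] x = x`. -/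
def IsClosedOrbit {X : Type*} (T : X → X) (n : ℕ) (τ : Set X) : Prop :=
  ∃ x : X, T^[n] x = x ∧ τ = {y | ∃ k < n, T^[k] x = y} ∧ τ.ncard = n

/-- `O_T(n)`: the number of closed orbits of length `n` under `T`. -/
noncomputable def numOrb {X : Type*} (T : X → X) (n : ℕ) : ℕ :=
  Nat.card {τ : Set X // IsClosedOrbit T n τ}

/-- The quotient `X̄` of `X` by the equivalence relation `x ∼ ι x`
(it carries the quotient topology). -/
abbrev HalfQuot {X : Type*} (ι : X → X) : Type _ := Quot (fun x y : X => ι x = y)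

/-- The quotient map `π : X → X̄`. -/
abbrev halfProj {X : Type*} (ι : X → X) : X → HalfQuot ι := Quot.mk _

theorem statement6
    {X : Type*} [MetricSpace X] [CompactSpace X]
    (T : X ≃ₜ X) (hfix : ∃ x : X, T x = x)
    (hfin : ∀ n : ℕ, 1 ≤ n → {x : X | (⇑T)^[n] x = x}.Finite)
    (ι : X → X) (hcont : Continuous ι) (hinv : ι ∘ ι = id)
    (hcomm : ι ∘ ⇑T = ⇑T ∘ ι)
    (Tbar : HalfQuot ι → HalfQuot ι)
    (hTbar : ∀ x : X, Tbar (halfProj ι x) = halfProj ι (T x))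
    :
    ∀ n : ℕ, 1 ≤ n →
      (numPer Tbar n : ℚ) ≤ (1 / 2 : ℚ) * (numPer (⇑T) n + numPer (⇑T) (2 * n)) := by
  intro n hn
  classical
  have hιι : ∀ x, ι (ι x) = x := fun x => congrFun hinv x
  have hcomm' : ∀ (k : ℕ) (x : X), ι ((⇑T)^[k] x) = (⇑T)^[k] (ι x) := by
    intro k
    induction k with
    | zero => intro x; rfl
    | succ k ih =>
      intro x
      have hc : ∀ y : X, ι (T y) = T (ι y) := fun y => congrFun hcomm y
      rw [Function.iterate_succ_apply, Function.iterate_succ_apply, ih, hc]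
  have hπ : ∀ (k : ℕ) (x : X), Tbar^[k] (halfProj ι x) = halfProj ι ((⇑T)^[k] x) := by
    intro k
    induction k with
    | zero => intro x; rfl
    | succ k ih =>
      intro x
      rw [Function.iterate_succ_apply, hTbar, ih, Function.iterate_succ_apply]
  have hkey : ∀ a b : X, halfProj ι a = halfProj ι b → a = b ∨ ι a = b := by
    intro a b h
    have h' := Quot.eq.mp h
    clear h
    induction h' with
    | rel x y hxy => exact Or.inr hxy
    | refl x => exact Or.inl rfl
    | symm x y hxy ih =>
      rcases ih with rfl | rfl
      · exact Or.inl rfl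
      · exact Or.inr (hιι x)
    | trans x y z h1 h2 ih1 ih2 =>
      rcases ih1 with rfl | rfl
      · exact ih2
      · rcases ih2 with rfl | h2'
        · exact Or.inr rfl
        · left; rw [← h2', hιι]
  have hsound : ∀ x : X, halfProj ι (ι x) = halfProj ι x := fun x =>
    (show halfProj ι x = halfProj ι (ι x) from Quot.sound rfl).symm
  have hA : ∀ p : {p : HalfQuot ι // Tbar^[n] p = p},
      (⇑T)^[n] p.1.out = p.1.out ∨ (⇑T)^[n] p.1.out = ι p.1.out := by
    intro p
    have hout : halfProj ι p.1.out = p.1 := Quot.out_eq p.1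
    have h1 : halfProj ι ((⇑T)^[n] p.1.out) = halfProj ι p.1.out := by
      rw [← hπ n, hout, p.2]
    rcases hkey _ _ h1 with h | h
    · exact Or.inl h
    · right
      have h2 := congrArg ι h
      rwa [hιι] at h2
  have h2n : ∀ p : {p : HalfQuot ι // Tbar^[n] p = p},
      (⇑T)^[2*n] p.1.out = p.1.out := by
    intro p
    rcases hA p with h | h
    · rw [two_mul, Function.iterate_add_apply, h, h]
    · rw [two_mul, Function.iterate_add_apply, h, ← hcomm', h, hιι]
  have h2nι : ∀ p : {p : HalfQuot ι // Tbar^[n] p = p},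
      (⇑T)^[2*n] (ι p.1.out) = ι p.1.out := by
    intro p
    rw [← hcomm', h2n p]
  have hnfix : ∀ p : {p : HalfQuot ι // Tbar^[n] p = p},
      ι p.1.out = p.1.out → (⇑T)^[n] p.1.out = p.1.out := by
    intro p hp
    rcases hA p with h | h
    · exact h
    · rw [h, hp]
  have hout : ∀ p q : {p : HalfQuot ι // Tbar^[n] p = p}, p.1.out = q.1.out → p = q := by
    intro p q h
    apply Subtype.ext
    rw [← Quot.out_eq p.1, ← Quot.out_eq q.1]
    exact congrArg _ h
  have houtι : ∀ p q : {p : HalfQuot ι // Tbar^[n] p = p}, ι p.1.out = q.1.out → p = q := by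
    intro p q h
    apply Subtype.ext
    rw [← Quot.out_eq p.1, ← Quot.out_eq q.1, ← h]
    exact (hsound _).symm
  let f : {p : HalfQuot ι // Tbar^[n] p = p} × Bool →
      {x : X // (⇑T)^[n] x = x} ⊕ {x : X // (⇑T)^[2*n] x = x} :=
    fun pb =>
      if h : ι pb.1.1.out = pb.1.1.out then
        if pb.2 then Sum.inl ⟨pb.1.1.out, hnfix pb.1 h⟩
        else Sum.inr ⟨pb.1.1.out, h2n pb.1⟩
      else
        if pb.2 then Sum.inr ⟨ι pb.1.1.out, h2nι pb.1⟩
        else Sum.inr ⟨pb.1.1.out, h2n pb.1⟩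
  have hf : Function.Injective f := by
    rintro ⟨p, b⟩ ⟨q, c⟩ h
    simp only [f] at h
    by_cases hp : ι p.1.out = p.1.out <;> by_cases hq : ι q.1.out = q.1.out <;>
      simp only [hp, hq, dif_pos, dif_neg, not_false_iff] at h <;>
      cases b <;> cases c <;>
      simp only [if_true, if_false, Bool.false_eq_true, Sum.inl.injEq, Sum.inr.injEq,
        Subtype.mk.injEq, reduceCtorEq] at h
    -- case hp, hq, b=false, c=false
    · exact Prod.ext (hout p q h) rfl
    -- case hp, hq, b=true, c=true
    · exact Prod.ext (hout p q h) rfl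
    -- case hp, ¬hq, b=false, c=false
    · exact Prod.ext (hout p q h) rfl
    -- case hp, ¬hq, b=false, c=true : h : out p = ι (out q)
    · have hpq := houtι q p h.symm
      have hxy : Quot.out q.1 = Quot.out p.1 := congrArg (fun r => Quot.out r.1) hpq
      exact absurd (h.symm.trans hxy.symm) hq
    -- case ¬hp, hq, b=false, c=false
    · exact Prod.ext (hout p q h) rfl
    -- case ¬hp, hq, b=true, c=false : h : ι (out p) = out q
    · have hpq := houtι p q h
      have hxy : Quot.out p.1 = Quot.out q.1 := congrArg (fun r => Quot.out r.1) hpq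
      exact absurd (h.trans hxy.symm) hp
    -- case ¬hp, ¬hq, b=false, c=false
    · exact Prod.ext (hout p q h) rfl
    -- case ¬hp, ¬hq, b=false, c=true : h : out p = ι (out q)
    · have hpq := houtι q p h.symm
      have hxy : Quot.out q.1 = Quot.out p.1 := congrArg (fun r => Quot.out r.1) hpq
      exact absurd (h.symm.trans hxy.symm) hq
    -- case ¬hp, ¬hq, b=true, c=false : h : ι (out p) = out q
    · have hpq := houtι p q h
      have hxy : Quot.out p.1 = Quot.out q.1 := congrArg (fun r => Quot.out r.1) hpq
      exact absurd (h.trans hxy.symm) hp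
    -- case ¬hp, ¬hq, b=true, c=true : h : ι (out p) = ι (out q)
    · have h2 := congrArg ι h
      rw [hιι, hιι] at h2
      exact Prod.ext (hout p q h2) rfl
  haveI : Finite {x : X // (⇑T)^[n] x = x} := (hfin n hn).to_subtype
  haveI : Finite {x : X // (⇑T)^[2*n] x = x} := (hfin (2*n) (by omega)).to_subtype
  have hcard := Nat.card_le_card_of_injective f hf
  rw [Nat.card_prod, Nat.card_sum, Nat.card_eq_fintype_card (α := Bool)] at hcard
  simp only [Fintype.card_bool] at hcard
  have hQ : (numPer Tbar n : ℚ) * 2 ≤ (numPer (⇑T) n : ℚ) + (numPer (⇑T) (2*n) : ℚ) := by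
    exact_mod_cast hcard
  linarith
end

section
/- Suppose the topological dynamical system (X̄,T̄) is obtained from (X,T) by halving. Then for every n ≥ 1, O_{T̄}(n) ≤ O_T(n) + O_T(2n). -/
open Function

lemma halfQuot_eq {X : Type*} {ι : X → X} (hι : ∀ a, ι (ι a) = a) {a b : X}
    (h : halfProj ι a = halfProj ι b) : a = b ∨ a = ι b := by
  have h' := Quot.eq.mp h
  clear h
  induction h' with
  | rel a b hab => right; rw [← hab, hι]
  | refl a => left; rfl
  | symm a b _ ih =>
      rcases ih with h | h
      · left; exact h.symm
      · right; rw [h, hι]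
  | trans a b c _ _ ih1 ih2 =>
      rcases ih1 with h1 | h1 <;> rcases ih2 with h2 | h2
      · left; exact h1.trans h2
      · right; rw [h1, h2]
      · right; rw [h1, h2]
      · left; rw [h1, h2, hι]

lemma finite_orbits {X : Type*} (T : X → X) (n : ℕ)
    (h : {x : X | T^[n] x = x}.Finite) : Finite {τ : Set X // IsClosedOrbit T n τ} := by
  have hsub : ∀ τ : {τ : Set X // IsClosedOrbit T n τ},
      (τ : Set X) ⊆ {x : X | T^[n] x = x} := by
    intro τp y hy
    obtain ⟨x, hx, hτ, -⟩ := τp.2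
    rw [hτ] at hy
    obtain ⟨k, -, rfl⟩ := hy
    show T^[n] (T^[k] x) = T^[k] x
    rw [← iterate_add_apply, add_comm, iterate_add_apply, hx]
  have : Finite {t : Set X // t ∈ {t : Set X | t ⊆ {x : X | T^[n] x = x}}} :=
    h.finite_subsets.to_subtype
  exact Finite.of_injective
    (fun τ => (⟨τ.1, hsub τ⟩ : {t : Set X // t ∈ {t : Set X | t ⊆ {x : X | T^[n] x = x}}}))
    (by intro a b hab
        simp only [Subtype.mk.injEq] at hab
        exact Subtype.ext hab)

theorem statement7
    {X : Type*} [MetricSpace X] [CompactSpace X]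
    (T : X ≃ₜ X) (hfix : ∃ x : X, T x = x)
    (hfin : ∀ n : ℕ, 1 ≤ n → {x : X | (⇑T)^[n] x = x}.Finite)
    (ι : X → X) (hcont : Continuous ι) (hinv : ι ∘ ι = id)
    (hcomm : ι ∘ ⇑T = ⇑T ∘ ι)
    (Tbar : HalfQuot ι → HalfQuot ι)
    (hTbar : ∀ x : X, Tbar (halfProj ι x) = halfProj ι (T x))
    :
    ∀ n : ℕ, 1 ≤ n → numOrb Tbar n ≤ numOrb (⇑T) n + numOrb (⇑T) (2 * n) := by
  intro n hn
  have hι : ∀ a, ι (ι a) = a := fun a => congrFun hinv a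
  have hcomm' : ∀ a, ι (T a) = T (ι a) := fun a => congrFun hcomm a
  have hcommIter : ∀ k a, ι ((⇑T)^[k] a) = (⇑T)^[k] (ι a) := by
    intro k
    induction k with
    | zero => intro a; rfl
    | succ k ih => intro a; rw [iterate_succ_apply, iterate_succ_apply, ih, hcomm']
  have hiter : ∀ (k : ℕ) (x : X), Tbar^[k] (halfProj ι x) = halfProj ι ((⇑T)^[k] x) := by
    intro k
    induction k with
    | zero => intro x; rfl
    | succ k ih => intro x; rw [iterate_succ_apply, iterate_succ_apply, hTbar, ih]
  -- key: every closed Tbar-orbit is the image of a closed T-orbit of length n or 2n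
  have key : ∀ τ : Set (HalfQuot ι), IsClosedOrbit Tbar n τ →
      ∃ σ : Set X, (IsClosedOrbit (⇑T) n σ ∨ IsClosedOrbit (⇑T) (2 * n) σ) ∧
        τ = halfProj ι '' σ := by
    rintro τ ⟨xb, hxbper, hτeq, hτcard⟩
    obtain ⟨x, hx⟩ := Quot.exists_rep xb
    have hx' : halfProj ι x = xb := hx
    have hx'' : ∀ k : ℕ, Tbar^[k] xb = halfProj ι ((⇑T)^[k] x) := by
      intro k; rw [← hx']; exact hiter k x
    have h1 : halfProj ι ((⇑T)^[n] x) = halfProj ι x := by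
      rw [← hx'' n, hxbper, ← hx']
    have h2n : (⇑T)^[2 * n] x = x := by
      rcases halfQuot_eq hι h1 with h | h
      · rw [two_mul, iterate_add_apply, h, h]
      · rw [two_mul, iterate_add_apply, h, ← hcommIter, h, hι]
    have hper : IsPeriodicPt (⇑T) (2 * n) x := h2n
    set m := minimalPeriod (⇑T) x with hm
    have hm0 : 0 < m := hper.minimalPeriod_pos (by omega)
    have hmdvd : m ∣ 2 * n := hper.minimalPeriod_dvd
    set σ : Set X := {y | ∃ k < m, (⇑T)^[k] x = y} with hσ
    have hσim : σ = (fun k => (⇑T)^[k] x) '' Set.Iio m := by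
      ext y
      simp only [hσ, Set.mem_setOf_eq, Set.mem_image, Set.mem_Iio]
    have hσfin : σ.Finite := by
      rw [hσim]; exact (Set.finite_Iio m).image _
    have hσcard : σ.ncard = m := by
      rw [hσim, Set.ncard_image_of_injOn (iterate_injOn_Iio_minimalPeriod),
        ← Finset.coe_range, Set.ncard_coe_finset, Finset.card_range]
    have horb : IsClosedOrbit (⇑T) m σ :=
      ⟨x, iterate_minimalPeriod, rfl, hσcard⟩
    have hperb : IsPeriodicPt Tbar n xb := hxbper
    have hτim : τ = halfProj ι '' σ := by
      rw [hτeq]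
      ext y
      simp only [Set.mem_setOf_eq, Set.mem_image, hσ]
      constructor
      · rintro ⟨j, hj, rfl⟩
        exact ⟨(⇑T)^[j] x, ⟨j % m, Nat.mod_lt _ hm0, iterate_mod_minimalPeriod_eq⟩,
          (hx'' j).symm⟩
      · rintro ⟨z, ⟨k, hk, rfl⟩, rfl⟩
        exact ⟨k % n, Nat.mod_lt _ (by omega), by
          rw [hperb.iterate_mod_apply k]; exact hx'' k⟩
    clear_value m
    have hnm : n ≤ m := by
      have h1 : τ.ncard ≤ σ.ncard := by
        rw [hτim]; exact Set.ncard_image_le hσfin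
      omega
    obtain ⟨c, hc⟩ := hmdvd
    have hc0 : c ≠ 0 := by rintro rfl; omega
    have hcle : c ≤ 2 := by
      by_contra hgt
      push_neg at hgt
      have h3 : 3 * m ≤ m * c := by
        calc 3 * m = m * 3 := by ring
          _ ≤ m * c := Nat.mul_le_mul_left m (by omega)
      omega
    have hc12 : c = 1 ∨ c = 2 := by omega
    have hmn : m = 2 * n ∨ m = n := by rcases hc12 with rfl | rfl <;> omega
    rcases hmn with h | h
    · exact ⟨σ, Or.inr (h ▸ horb), hτim⟩
    · exact ⟨σ, Or.inl (h ▸ horb), hτim⟩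
  have f1 : Finite {σ : Set X // IsClosedOrbit (⇑T) n σ} := finite_orbits _ _ (hfin n hn)
  have f2 : Finite {σ : Set X // IsClosedOrbit (⇑T) (2 * n) σ} :=
    finite_orbits _ _ (hfin (2 * n) (by omega))
  classical
  set F : {τ : Set (HalfQuot ι) // IsClosedOrbit Tbar n τ} →
      {σ : Set X // IsClosedOrbit (⇑T) n σ} ⊕ {σ : Set X // IsClosedOrbit (⇑T) (2 * n) σ} :=
    fun τ =>
      if h : IsClosedOrbit (⇑T) n (Classical.choose (key τ.1 τ.2)) then
        Sum.inl ⟨_, h⟩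
      else
        Sum.inr ⟨_, ((Classical.choose_spec (key τ.1 τ.2)).1).resolve_left h⟩
    with hF
  have hFinj : Function.Injective F := by
    intro a b hab
    have ha := (Classical.choose_spec (key a.1 a.2)).2
    have hb := (Classical.choose_spec (key b.1 b.2)).2
    have hchoose : Classical.choose (key a.1 a.2) = Classical.choose (key b.1 b.2) := by
      rw [hF] at hab
      dsimp only at hab
      split_ifs at hab with h1 h2 h2 <;>
        first
          | (simpa using congrArg (Sum.elim Subtype.val Subtype.val) hab)
          | simp at hab
    exact Subtype.ext (by rw [ha, hb, hchoose])
  calc numOrb Tbar n ≤ Nat.card ({σ : Set X // IsClosedOrbit (⇑T) n σ} ⊕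
        {σ : Set X // IsClosedOrbit (⇑T) (2 * n) σ}) := Nat.card_le_card_of_injective F hFinj
    _ = numOrb (⇑T) n + numOrb (⇑T) (2 * n) := Nat.card_sum
end

section
/- Suppose the topological dynamical system (X̄,T̄) is obtained from (X,T) by halving. Then for every odd n ≥ 1, O_{T̄}(n) ≥ (1/2)·O_T(n). -/
open Function

section aux
variable {X : Type*}

lemma aux_proj_eq_iff (ι : X → X) (hinv : ι ∘ ι = id) {x y : X} :
    halfProj ι x = halfProj ι y ↔ y = x ∨ y = ι x := by
  have hi : ∀ a, ι (ι a) = a := fun a => congrFun hinv a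
  constructor
  · intro h
    have h2 : ({x, ι x} : Set X) = {y, ι y} := by
      have h3 := congrArg (Quot.lift (fun a => ({a, ι a} : Set X))
        (fun a b hab => by subst hab; show ({a, ι a} : Set X) = {ι a, ι (ι a)};
                           rw [hi a]; exact Set.pair_comm a (ι a))) h
      exact h3
    have hy : y ∈ ({x, ι x} : Set X) := h2 ▸ Set.mem_insert y {ι y}
    simpa using hy
  · rintro (rfl | rfl)
    · rfl
    · exact Quot.sound rfl

lemma aux_iter_mod (f : X → X) {m : ℕ} {x : X} (h : f^[m] x = x) (k : ℕ) :
    f^[k] x = f^[k % m] x := by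
  conv_lhs => rw [← Nat.mod_add_div k m]
  rw [Function.iterate_add_apply]
  congr 1
  rw [Function.iterate_mul]
  exact Function.iterate_fixed h _

lemma aux_osset_eq_image (f : X → X) (n : ℕ) (x : X) :
    {y | ∃ k < n, f^[k] x = y} = (fun k => f^[k] x) '' Set.Iio n := by
  ext y
  simp [Set.mem_image]

lemma aux_dvd (f : X → X) {n : ℕ} (hn : 1 ≤ n) {x : X} (hx : f^[n] x = x)
    (hcard : ({y | ∃ k < n, f^[k] x = y}).ncard = n) :
    ∀ m, f^[m] x = x → n ∣ m := by
  have key : ∀ m, 1 ≤ m → m < n → f^[m] x ≠ x := by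
    intro m hm1 hmn hfixm
    have hsub : {y | ∃ k < n, f^[k] x = y} ⊆ (fun k => f^[k] x) '' Set.Iio m := by
      rintro y ⟨k, _, rfl⟩
      exact ⟨k % m, Nat.mod_lt k hm1, rfl.trans (aux_iter_mod f hfixm k).symm⟩
    have hle : ({y | ∃ k < n, f^[k] x = y}).ncard ≤ m := by
      refine le_trans (Set.ncard_le_ncard hsub ((Set.finite_Iio m).image _)) ?_
      calc ((fun k => f^[k] x) '' Set.Iio m).ncard ≤ (Set.Iio m).ncard :=
            Set.ncard_image_le (Set.finite_Iio m)
        _ = m := by rw [← Finset.coe_range, Set.ncard_coe_finset, Finset.card_range]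
    omega
  intro m hfm
  have h2 : f^[m % n] x = x := by rw [← aux_iter_mod f hx m]; exact hfm
  rcases Nat.eq_zero_or_pos (m % n) with h0 | hp
  · exact Nat.dvd_of_mod_eq_zero h0
  · exact absurd h2 (key _ hp (Nat.mod_lt m hn))

lemma aux_comm_iter {ι T : X → X} (hcomm : ι ∘ T = T ∘ ι) (k : ℕ) (x : X) :
    ι (T^[k] x) = T^[k] (ι x) := by
  induction k with
  | zero => rfl
  | succ k ih =>
    rw [Function.iterate_succ_apply', Function.iterate_succ_apply', ← ih]
    exact congrFun hcomm _

lemma aux_proj_iter {ι T : X → X} {Tbar : HalfQuot ι → HalfQuot ι}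
    (hTbar : ∀ x, Tbar (halfProj ι x) = halfProj ι (T x)) (k : ℕ) (x : X) :
    Tbar^[k] (halfProj ι x) = halfProj ι (T^[k] x) := by
  induction k with
  | zero => rfl
  | succ k ih =>
    rw [Function.iterate_succ_apply', ih, hTbar, Function.iterate_succ_apply']

lemma aux_osset_all (f : X → X) {n : ℕ} (hn : 1 ≤ n) {x : X} (hx : f^[n] x = x) :
    {y | ∃ k < n, f^[k] x = y} = {y | ∃ k, f^[k] x = y} := by
  ext y
  constructor
  · rintro ⟨k, _, rfl⟩; exact ⟨k, rfl⟩
  · rintro ⟨k, rfl⟩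
    exact ⟨k % n, Nat.mod_lt k hn, (aux_iter_mod f hx k).symm⟩

lemma aux_osset_shift (f : X → X) {n : ℕ} (hn : 1 ≤ n) {x : X} (hx : f^[n] x = x) (k : ℕ) :
    {y | ∃ j < n, f^[j] (f^[k] x) = y} = {y | ∃ j < n, f^[j] x = y} := by
  have hk : f^[n] (f^[k] x) = f^[k] x := by
    rw [← Function.iterate_add_apply, Nat.add_comm, Function.iterate_add_apply, hx]
  have h2 : f^[k * n] x = x := by
    rw [Nat.mul_comm, Function.iterate_mul]
    exact Function.iterate_fixed hx k
  rw [aux_osset_all f hn hk, aux_osset_all f hn hx]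
  ext y
  constructor
  · rintro ⟨j, rfl⟩
    exact ⟨j + k, by rw [Function.iterate_add_apply]⟩
  · rintro ⟨j, rfl⟩
    refine ⟨j + k * n - k, ?_⟩
    have h1 : (j + k * n - k) + k = j + k * n := by
      have : k ≤ k * n := Nat.le_mul_of_pos_right k hn
      omega
    rw [← Function.iterate_add_apply, h1, Function.iterate_add_apply, h2]

lemma aux_osset_iota {ι f : X → X} (hcomm : ι ∘ f = f ∘ ι) (n : ℕ) (x : X) :
    ι '' {y | ∃ k < n, f^[k] x = y} = {y | ∃ k < n, f^[k] (ι x) = y} := by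
  ext y
  simp only [Set.mem_image, Set.mem_setOf_eq]
  constructor
  · rintro ⟨z, ⟨k, hk, rfl⟩, rfl⟩
    exact ⟨k, hk, (aux_comm_iter hcomm k x).symm⟩
  · rintro ⟨k, hk, rfl⟩
    exact ⟨f^[k] x, ⟨k, hk, rfl⟩, aux_comm_iter hcomm k x⟩

end aux

lemma aux_card_le_two_mul {α β : Type*} [Finite β] (f : α → β) (ι' : α → α)
    (hfib : ∀ a₁ a₂ : α, f a₁ = f a₂ → a₂ = a₁ ∨ a₂ = ι' a₁) :
    Nat.card α ≤ 2 * Nat.card β := by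
  classical
  obtain h | h := isEmpty_or_nonempty α
  · simp [Nat.card_of_isEmpty]
  · have hsec : ∀ b : β, ∃ a : α, (∃ a', f a' = b) → f a = b := by
      intro b
      by_cases hb : ∃ a', f a' = b
      · obtain ⟨a, ha⟩ := hb; exact ⟨a, fun _ => ha⟩
      · exact ⟨Classical.arbitrary α, fun h' => absurd h' hb⟩
    choose pick hpick using hsec
    have hg : Function.Injective (fun a => (f a, decide (a = pick (f a)))) := by
      intro a₁ a₂ hp
      have h1 : f a₁ = f a₂ := congrArg Prod.fst hp
      have h2 : decide (a₁ = pick (f a₁)) = decide (a₂ = pick (f a₂)) :=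
        congrArg Prod.snd hp
      rw [h1] at h2
      by_cases hc : a₂ = pick (f a₂)
      · have hd : decide (a₁ = pick (f a₂)) = true := h2.trans (decide_eq_true hc)
        rw [hc]; exact of_decide_eq_true hd
      · have hc1 : a₁ ≠ pick (f a₂) := by
          intro hh
          rw [decide_eq_true hh] at h2
          exact hc (of_decide_eq_true h2.symm)
        have hpf : f (pick (f a₂)) = f a₂ := hpick _ ⟨a₂, rfl⟩
        have e1 := hfib (pick (f a₂)) a₁ (by rw [hpf, h1])
        have e2 := hfib (pick (f a₂)) a₂ (by rw [hpf])
        rcases e1 with e1 | e1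
        · exact absurd e1 hc1
        · rcases e2 with e2 | e2
          · exact absurd e2 hc
          · exact e1.trans e2.symm
    calc Nat.card α ≤ Nat.card (β × Bool) := Nat.card_le_card_of_injective _ hg
      _ = 2 * Nat.card β := by
          rw [Nat.card_prod]
          simp [Nat.card_eq_fintype_card, Nat.mul_comm]


theorem statement8
    {X : Type*} [MetricSpace X] [CompactSpace X]
    (T : X ≃ₜ X) (hfix : ∃ x : X, T x = x)
    (hfin : ∀ n : ℕ, 1 ≤ n → {x : X | (⇑T)^[n] x = x}.Finite)
    (ι : X → X) (hcont : Continuous ι) (hinv : ι ∘ ι = id)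
    (hcomm : ι ∘ ⇑T = ⇑T ∘ ι)
    (Tbar : HalfQuot ι → HalfQuot ι)
    (hTbar : ∀ x : X, Tbar (halfProj ι x) = halfProj ι (T x))
    :
    ∀ n : ℕ, 1 ≤ n → Odd n → (numOrb Tbar n : ℚ) ≥ (1 / 2 : ℚ) * numOrb (⇑T) n := by
  intro n hn hodd
  classical
  have hi : ∀ a, ι (ι a) = a := fun a => congrFun hinv a
  have hιinj : Function.Injective ι := Function.Involutive.injective hi
  -- image of an orbit under the projection
  have himg : ∀ x : X, halfProj ι '' {y | ∃ k < n, (⇑T)^[k] x = y}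
      = {y | ∃ k < n, Tbar^[k] (halfProj ι x) = y} := by
    intro x
    ext y
    simp only [Set.mem_image, Set.mem_setOf_eq]
    constructor
    · rintro ⟨z, ⟨k, hk, rfl⟩, rfl⟩
      exact ⟨k, hk, aux_proj_iter hTbar k x⟩
    · rintro ⟨k, hk, rfl⟩
      exact ⟨(⇑T)^[k] x, ⟨k, hk, rfl⟩, (aux_proj_iter hTbar k x).symm⟩
  -- injectivity of k ↦ Tbar^[k] (π x) on Iio n
  have hinjOn : ∀ x : X, (⇑T)^[n] x = x → ({y | ∃ k < n, (⇑T)^[k] x = y}).ncard = n →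
      Set.InjOn (fun k => Tbar^[k] (halfProj ι x)) (Set.Iio n) := by
    intro x hx hcard
    have hdvd := aux_dvd (⇑T) hn hx hcard
    have main : ∀ i j : ℕ, i < n → j < n → i < j →
        Tbar^[i] (halfProj ι x) = Tbar^[j] (halfProj ι x) → False := by
      intro i j hi' hj' hlt hij
      rw [aux_proj_iter hTbar, aux_proj_iter hTbar, aux_proj_eq_iff ι hinv] at hij
      have hcontra : ¬ n ∣ (n - i + j) := by
        intro h8
        have h9 : n ∣ (n - i + j) - n := Nat.dvd_sub h8 (dvd_refl n)
        have h10 : (n - i + j) - n = j - i := by omega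
        rw [h10] at h9
        have := Nat.le_of_dvd (by omega) h9
        omega
      rcases hij with hA | hB
      · -- T^[j] x = T^[i] x
        have hm : (⇑T)^[n - i + j] x = x := by
          rw [Function.iterate_add_apply, hA, ← Function.iterate_add_apply,
            Nat.sub_add_cancel (le_of_lt hi'), hx]
        exact hcontra (hdvd _ hm)
      · -- T^[j] x = ι (T^[i] x)
        have hm : (⇑T)^[n - i + j] x = ι x := by
          rw [Function.iterate_add_apply, hB, ← aux_comm_iter hcomm,
            ← Function.iterate_add_apply, Nat.sub_add_cancel (le_of_lt hi'), hx]
        have hm2 : (⇑T)^[2 * (n - i + j)] x = x := by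
          rw [two_mul, Function.iterate_add_apply, hm, ← aux_comm_iter hcomm, hm, hi x]
        have h7 := hdvd _ hm2
        have hcop : Nat.Coprime n 2 := hodd.coprime_two_right
        exact hcontra (hcop.dvd_of_dvd_mul_left h7)
    intro i hi' j hj' hij
    simp only [Set.mem_Iio] at hi' hj'
    rcases lt_trichotomy i j with h | h | h
    · exact absurd hij (fun hh => main i j hi' hj' h hh)
    · exact h
    · exact absurd hij.symm (fun hh => main j i hj' hi' h hh)
  -- image orbits are closed orbits of length n
  have key1 : ∀ x : X, (⇑T)^[n] x = x → ({z | ∃ k < n, (⇑T)^[k] x = z}).ncard = n →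
      IsClosedOrbit Tbar n (halfProj ι '' {z | ∃ k < n, (⇑T)^[k] x = z}) := by
    intro x hx hcard
    refine ⟨halfProj ι x, ?_, himg x, ?_⟩
    · rw [aux_proj_iter hTbar, hx]
    · rw [himg x, aux_osset_eq_image,
        Set.ncard_image_of_injOn (hinjOn x hx hcard),
        ← Finset.coe_range, Set.ncard_coe_finset, Finset.card_range]
  -- fibers of the projection on orbits
  have key2 : ∀ x y : X, (⇑T)^[n] x = x → (⇑T)^[n] y = y →
      halfProj ι '' {z | ∃ k < n, (⇑T)^[k] x = z}
        = halfProj ι '' {z | ∃ k < n, (⇑T)^[k] y = z} →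
      {z | ∃ k < n, (⇑T)^[k] y = z} = {z | ∃ k < n, (⇑T)^[k] x = z} ∨
      {z | ∃ k < n, (⇑T)^[k] y = z} = ι '' {z | ∃ k < n, (⇑T)^[k] x = z} := by
    intro x y hx hy heq
    have hy0 : halfProj ι y ∈ halfProj ι '' {z | ∃ k < n, (⇑T)^[k] y = z} :=
      ⟨y, ⟨0, hn, rfl⟩, rfl⟩
    rw [← heq] at hy0
    obtain ⟨z, ⟨k, hk, rfl⟩, hpz⟩ := hy0
    rw [aux_proj_eq_iff ι hinv] at hpz
    rcases hpz with rfl | rfl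
    · left; exact aux_osset_shift (⇑T) hn hx k
    · right
      have hx' : (⇑T)^[n] (ι x) = ι x := by rw [← aux_comm_iter hcomm, hx]
      rw [aux_comm_iter hcomm k x, aux_osset_shift (⇑T) hn hx' k]
      exact (aux_osset_iota hcomm n x).symm
  -- ι image of a closed orbit is a closed orbit
  have keyι : ∀ τ : Set X, IsClosedOrbit (⇑T) n τ → IsClosedOrbit (⇑T) n (ι '' τ) := by
    rintro τ ⟨x, hx, rfl, hcard⟩
    refine ⟨ι x, by rw [← aux_comm_iter hcomm, hx], aux_osset_iota hcomm n x, ?_⟩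
    rw [Set.ncard_image_of_injective _ hιinj]; exact hcard
  -- finiteness of the set of closed orbits of Tbar
  have hfinβ : Finite {σ : Set (HalfQuot ι) // IsClosedOrbit Tbar n σ} := by
    have hF : (halfProj ι '' {x : X | (⇑T)^[2 * n] x = x}).Finite :=
      (hfin (2 * n) (by omega)).image _
    have hsub : {σ : Set (HalfQuot ι) | IsClosedOrbit Tbar n σ}
        ⊆ {s | s ⊆ halfProj ι '' {x : X | (⇑T)^[2 * n] x = x}} := by
      rintro σ ⟨ξ, hξ, rfl, hcard⟩
      obtain ⟨x₀, rfl⟩ := Quot.exists_rep ξ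
      have hξ' : Tbar^[n] (halfProj ι x₀) = halfProj ι x₀ := hξ
      rw [aux_proj_iter hTbar, aux_proj_eq_iff ι hinv] at hξ'
      have hx2 : (⇑T)^[2 * n] x₀ = x₀ := by
        rcases hξ' with h1 | h1
        · rw [two_mul, Function.iterate_add_apply, ← h1, ← h1]
        · have h2 : (⇑T)^[n] x₀ = ι x₀ := by
            have h3 := congrArg ι h1
            rw [hi] at h3
            exact h3.symm
          rw [two_mul, Function.iterate_add_apply, h2, ← aux_comm_iter hcomm, h2, hi]
      rintro y ⟨k, hk, rfl⟩
      refine ⟨(⇑T)^[k] x₀, ?_, (aux_proj_iter hTbar k x₀).symm⟩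
      show (⇑T)^[2 * n] ((⇑T)^[k] x₀) = (⇑T)^[k] x₀
      rw [← Function.iterate_add_apply, Nat.add_comm, Function.iterate_add_apply, hx2]
    exact Set.Finite.to_subtype (hF.finite_subsets.subset hsub)
  -- the map on orbits
  let fmap : {τ : Set X // IsClosedOrbit (⇑T) n τ} →
      {σ : Set (HalfQuot ι) // IsClosedOrbit Tbar n σ} := fun τ =>
    ⟨halfProj ι '' τ.1, by
      obtain ⟨x, hx, heq, hcard⟩ := τ.2
      rw [heq] at hcard ⊢
      exact key1 x hx hcard⟩
  let ιmap : {τ : Set X // IsClosedOrbit (⇑T) n τ} → {τ : Set X // IsClosedOrbit (⇑T) n τ} :=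
    fun τ => ⟨ι '' τ.1, keyι τ.1 τ.2⟩
  have hfib : ∀ τ₁ τ₂ : {τ : Set X // IsClosedOrbit (⇑T) n τ},
      fmap τ₁ = fmap τ₂ → τ₂ = τ₁ ∨ τ₂ = ιmap τ₁ := by
    intro τ₁ τ₂ hf
    obtain ⟨x, hx, heq1, hc1⟩ := τ₁.2
    obtain ⟨y, hy, heq2, hc2⟩ := τ₂.2
    have hsets : halfProj ι '' τ₁.1 = halfProj ι '' τ₂.1 := congrArg Subtype.val hf
    rw [heq1, heq2] at hsets
    rcases key2 x y hx hy hsets with h | h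
    · left; exact Subtype.ext (by rw [heq2, heq1, h])
    · right
      refine Subtype.ext ?_
      show τ₂.1 = ι '' τ₁.1
      rw [heq2, heq1, h]
  have main : Nat.card {τ : Set X // IsClosedOrbit (⇑T) n τ} ≤
      2 * Nat.card {σ : Set (HalfQuot ι) // IsClosedOrbit Tbar n σ} :=
    aux_card_le_two_mul fmap ιmap hfib
  have hq : (numOrb (⇑T) n : ℚ) ≤ 2 * (numOrb Tbar n : ℚ) := by
    have : numOrb (⇑T) n ≤ 2 * numOrb Tbar n := main
    exact_mod_cast this
  rw [ge_iff_le]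
  linarith
end

section
/- Let (X,T) be a topological dynamical system and ι a continuous involution on X commuting with T, with halved system (X̄,T̄). Then (X̄,T̄) is again a topological dynamical system: X̄ (with the quotient topology) is a compact metrizable space, T̄ is a homeomorphism of X̄, T̄ has at least one fixed point, and for every n ≥ 1 the set of points of period n under T̄ is finite. -/
open Function

/-- Characterization of equality in the halved quotient. -/
lemma halfProj_eq_iff {X : Type*} {ι : X → X} (hinv : ι ∘ ι = id) (a b : X) :
    halfProj ι a = halfProj ι b ↔ a = b ∨ ι a = b := by
  have hii : ∀ x, ι (ι x) = x := fun x => congrFun hinv x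
  constructor
  · intro h
    rw [Quot.eq] at h
    induction h with
    | rel x y hxy => exact Or.inr hxy
    | refl x => exact Or.inl rfl
    | symm x y _ ih =>
      rcases ih with h | h
      · exact Or.inl h.symm
      · exact Or.inr (by rw [← h, hii])
    | trans x y z _ _ ih1 ih2 =>
      rcases ih1 with h | h <;> rcases ih2 with h' | h'
      · exact Or.inl (h.trans h')
      · exact Or.inr (by rw [h, h'])
      · exact Or.inr (by rw [← h'] ; rw [h])
      · exact Or.inl (by rw [← h', ← h, hii])
  · rintro (rfl | h)
    · rfl
    · exact Quot.sound h

theorem statement9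
    {X : Type*} [MetricSpace X] [CompactSpace X]
    (T : X ≃ₜ X) (hfix : ∃ x : X, T x = x)
    (hfin : ∀ n : ℕ, 1 ≤ n → {x : X | (⇑T)^[n] x = x}.Finite)
    (ι : X → X) (hcont : Continuous ι) (hinv : ι ∘ ι = id)
    (hcomm : ι ∘ ⇑T = ⇑T ∘ ι)
    (Tbar : HalfQuot ι → HalfQuot ι)
    (hTbar : ∀ x : X, Tbar (halfProj ι x) = halfProj ι (T x))
    :
    CompactSpace (HalfQuot ι) ∧ TopologicalSpace.MetrizableSpace (HalfQuot ι) ∧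
    IsHomeomorph Tbar ∧ (∃ y : HalfQuot ι, Tbar y = y) ∧
    (∀ n : ℕ, 1 ≤ n → {y : HalfQuot ι | Tbar^[n] y = y}.Finite) := by
  have hii : ∀ x, ι (ι x) = x := fun x => congrFun hinv x
  have hQ : Topology.IsQuotientMap (halfProj ι) := isQuotientMap_quot_mk
  have hsurj : Surjective (halfProj ι) := Quot.exists_rep
  have heq := halfProj_eq_iff (ι := ι) hinv
  -- saturation of a set
  have hsat : ∀ U : Set X, halfProj ι ⁻¹' (halfProj ι '' U) = U ∪ ι ⁻¹' U := by
    intro U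
    ext x
    simp only [Set.mem_preimage, Set.mem_image, Set.mem_union]
    constructor
    · rintro ⟨u, hu, h⟩
      rcases (heq u x).1 h with rfl | h
      · exact Or.inl hu
      · right; show ι x ∈ U; rw [← h, hii]; exact hu
    · rintro (hx | hx)
      · exact ⟨x, hx, rfl⟩
      · exact ⟨ι x, hx, (heq _ _).2 (Or.inr (hii x))⟩
  -- openness of the projection
  have hopen : IsOpenMap (halfProj ι) := by
    intro U hU
    rw [← hQ.isOpen_preimage, hsat]
    exact hU.union (hU.preimage hcont)
  -- compactness
  have hcomp : CompactSpace (HalfQuot ι) :=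
    ⟨by rw [← hsurj.range_eq]; exact isCompact_range hQ.continuous⟩
  -- Hausdorff
  have ht2 : T2Space (HalfQuot ι) := by
    constructor
    intro a b hab
    obtain ⟨x, rfl⟩ := hsurj a
    obtain ⟨y, rfl⟩ := hsurj b
    have h1 : x ≠ y := fun h => hab (by rw [h])
    have h2 : ι x ≠ y := fun h => hab ((heq x y).2 (Or.inr h))
    have h3 : x ≠ ι y := fun h => h2 (by rw [h, hii])
    have h4 : ι x ≠ ι y := fun h => h1 (by rw [← hii x, h, hii])
    have hdisj : Disjoint ({x, ι x} : Set X) {y, ι y} := by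
      rw [Set.disjoint_left]
      rintro a ha hb
      simp only [Set.mem_insert_iff, Set.mem_singleton_iff] at ha hb
      rcases ha with rfl | rfl <;> rcases hb with h | h
      exacts [h1 h, h3 h, h2 h, h4 h]
    have hc1 : IsCompact ({x, ι x} : Set X) := (Set.toFinite _).isCompact
    have hc2 : IsCompact ({y, ι y} : Set X) := (Set.toFinite _).isCompact
    obtain ⟨U, V, hUo, hVo, hU, hV, hUV⟩ :=
      SeparatedNhds.of_isCompact_isCompact hc1 hc2 hdisj
    -- invariant opens
    set U' := U ∩ ι ⁻¹' U with hU'def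
    set V' := V ∩ ι ⁻¹' V with hV'def
    have hU'o : IsOpen U' := hUo.inter (hUo.preimage hcont)
    have hV'o : IsOpen V' := hVo.inter (hVo.preimage hcont)
    have hxU' : x ∈ U' := ⟨hU (by simp), by simp only [Set.mem_preimage]; exact hU (by simp)⟩
    have hyV' : y ∈ V' := ⟨hV (by simp), by simp only [Set.mem_preimage]; exact hV (by simp)⟩
    refine ⟨halfProj ι '' U', halfProj ι '' V', hopen _ hU'o, hopen _ hV'o,
      ⟨x, hxU', rfl⟩, ⟨y, hyV', rfl⟩, ?_⟩
    rw [Set.disjoint_left]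
    rintro c ⟨u, hu, rfl⟩ ⟨v, hv, hvc⟩
    rcases (heq v u).1 hvc with rfl | h
    · exact hUV.le_bot ⟨hu.1, hv.1⟩ 
    · subst h
      exact hUV.le_bot ⟨hu.1, hv.2⟩
  have hsc : SecondCountableTopology (HalfQuot ι) := hQ.secondCountableTopology hopen
  have hmet : TopologicalSpace.MetrizableSpace (HalfQuot ι) := by
    haveI := hcomp; haveI := ht2; haveI := hsc
    infer_instance
  -- Tbar continuous
  have hTbarπ : Tbar ∘ halfProj ι = halfProj ι ∘ ⇑T := funext fun x => hTbar x
  have hTc : Continuous Tbar := by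
    rw [hQ.continuous_iff, hTbarπ]
    exact hQ.continuous.comp T.continuous
  -- bijectivity
  have hTinj : Injective Tbar := by
    intro a b h
    obtain ⟨x, rfl⟩ := hsurj a
    obtain ⟨y, rfl⟩ := hsurj b
    rw [hTbar, hTbar] at h
    rcases (heq _ _).1 h with h | h
    · rw [T.injective h]
    · have hc : ι (T x) = T (ι x) := congrFun hcomm x
      have : T (ι x) = T y := by rw [← hc]; exact h
      exact (heq x y).2 (Or.inr (T.injective this))
  have hTsurj : Surjective Tbar := by
    intro b
    obtain ⟨y, rfl⟩ := hsurj b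
    exact ⟨halfProj ι (T.symm y), by rw [hTbar, T.apply_symm_apply]⟩
  have hhomeo : IsHomeomorph Tbar := by
    haveI := hcomp; haveI := ht2
    exact (isHomeomorph_iff_continuous_bijective).2 ⟨hTc, hTinj, hTsurj⟩
  -- fixed point
  obtain ⟨x₀, hx₀⟩ := hfix
  have hfixbar : ∃ y : HalfQuot ι, Tbar y = y :=
    ⟨halfProj ι x₀, by rw [hTbar, hx₀]⟩
  -- iterate formula
  have hiter : ∀ n (x : X), Tbar^[n] (halfProj ι x) = halfProj ι ((⇑T)^[n] x) := by
    intro n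
    induction n with
    | zero => intro x; simp
    | succ n ih =>
      intro x
      rw [Function.iterate_succ_apply, hTbar, ih, Function.iterate_succ_apply]
  -- commutation of ι with iterates
  have hcommn : ∀ n (x : X), ι ((⇑T)^[n] x) = (⇑T)^[n] (ι x) := by
    intro n
    induction n with
    | zero => intro x; simp
    | succ n ih =>
      intro x
      have hc : ∀ z, ι (T z) = T (ι z) := fun z => congrFun hcomm z
      rw [Function.iterate_succ_apply', Function.iterate_succ_apply', hc, ih]
  refine ⟨hcomp, hmet, hhomeo, hfixbar, ?_⟩
  intro n hn
  have hsub : {y : HalfQuot ι | Tbar^[n] y = y} ⊆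
      halfProj ι '' {x : X | (⇑T)^[2 * n] x = x} := by
    intro y hy
    obtain ⟨x, rfl⟩ := hsurj y
    rw [Set.mem_setOf_eq, hiter] at hy
    rcases (heq _ _).1 hy with h | h
    · refine ⟨x, ?_, rfl⟩
      show (⇑T)^[2 * n] x = x
      rw [two_mul, Function.iterate_add_apply, h, h]
    · refine ⟨x, ?_, rfl⟩
      show (⇑T)^[2 * n] x = x
      have hx : (⇑T)^[n] x = ι x := by rw [← hii ((⇑T)^[n] x), h]
      rw [two_mul, Function.iterate_add_apply, hx, ← hcommn, hx, hii]
  exact ((hfin (2 * n) (by omega)).image _).subset hsub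
end

section
/- Let (b_n^s), (b_n^g), (b_n^h) be three sequences of non-negative integers with b_1^s > 0. Define a_n^s = b_n^s, a_n^g = 2·b_n^g, a_n^h = b_{n/2}^h if n is even and a_n^h = 0 if n is odd, and set a_n = a_n^s + a_n^g + a_n^h and b_n = b_n^s + b_n^g + b_n^h for all n ≥ 1. Then there exist a topological dynamical system (X,T) and a continuous involution ι : X → X commuting with T such that O_T(n) = a_n and O_{T̄}(n) = b_n for all n ≥ 1, where (X̄,T̄) is the halved system. -/
/-!
Realize the data by a permutation of a countable discrete set made of finite cycles, compactified
by a fixed point at infinity. The involution fixes each cycle counted by `b_n^s` pointwise, swaps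
the two cycles of each pair counted by `b_n^g`, and turns each cycle of length `2n` counted by
`b_n^h` by half a revolution. In the quotient, the first kind stays an `n`-cycle, each swapped pair
becomes one `n`-cycle and each half-turned `2n`-cycle becomes an `n`-cycle. A union of cycles has
exactly as many closed orbits of length `n` as cycles of length `n`, and the point at infinity is
one of the `b_1^s` fixed points.
-/

open Function

section Conjugacy

variable {α β : Type*} {f : α → α} {g : β → β}

theorem IsClosedOrbit.image_equiv {n : ℕ} {τ : Set α} (hτ : IsClosedOrbit f n τ)
    (e : α ≃ β) (h : Semiconj e f g) : IsClosedOrbit g n (e '' τ) := by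
  obtain ⟨x, hper, rfl, hcard⟩ := hτ
  refine ⟨e x, by rw [← (h.iterate_right n) x, hper], ?_, ?_⟩
  · ext y
    simp only [Set.mem_image, Set.mem_ofPred_eq]
    constructor
    · rintro ⟨_, ⟨k, hk, rfl⟩, rfl⟩
      exact ⟨k, hk, (h.iterate_right k x).symm⟩
    · rintro ⟨k, hk, rfl⟩
      exact ⟨_, ⟨k, hk, rfl⟩, h.iterate_right k x⟩
  · rwa [Set.ncard_image_of_injective _ e.injective]

theorem numOrb_eq_of_semiconj (e : α ≃ β) (h : Semiconj e f g) (n : ℕ) :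
    numOrb f n = numOrb g n := by
  have h' : Semiconj e.symm g f := fun y => e.injective (by simp [h (e.symm y)])
  exact Nat.card_congr
    { toFun := fun τ => ⟨e '' τ.1, τ.2.image_equiv e h⟩
      invFun := fun σ => ⟨e.symm '' σ.1, σ.2.image_equiv e.symm h'⟩
      left_inv := fun τ => Subtype.ext (by simp)
      right_inv := fun σ => Subtype.ext (by simp) }

theorem finite_setOf_iterate_eq_self_of_semiconj (e : α ≃ β) (h : Semiconj e f g) {n : ℕ}
    (hg : {y | g^[n] y = y}.Finite) : {x | f^[n] x = x}.Finite := by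
  refine (hg.preimage e.injective.injOn).subset fun x (hx : f^[n] x = x) => ?_
  show g^[n] (e x) = e x
  rw [← h.iterate_right n x, hx]

end Conjugacy

section Counting

variable {α β : Type*} (f : α → ℕ) (g : β → ℕ) (n : ℕ)

def subtypeOptionElimEquiv :
    {o : Option α // Option.elim' 1 f o = n} ≃ {a // f a = n} ⊕ {_u : Unit // 1 = n} :=
  ((Equiv.optionEquivSumPUnit α).subtypeEquiv (q := Sum.elim (f · = n) fun _ => 1 = n)
    fun o => by cases o <;> rfl).trans Equiv.subtypeSum

theorem card_subtype_optionElim [Finite {a // f a = n}] :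
    Nat.card {o : Option α // Option.elim' 1 f o = n} =
      Nat.card {a // f a = n} + if n = 1 then 1 else 0 := by
  rw [Nat.card_congr (subtypeOptionElimEquiv f n), Nat.card_sum]
  split_ifs with h
  · subst h; simp
  · simp [Ne.symm h]

def subtypeSumElimEquiv : {x // Sum.elim f g x = n} ≃ {a // f a = n} ⊕ {b // g b = n} :=
  Equiv.subtypeSum

theorem finite_subtype_sumElim [Finite {a // f a = n}] [Finite {b // g b = n}] :
    Finite {x // Sum.elim f g x = n} :=
  Finite.of_equiv _ (subtypeSumElimEquiv f g n).symm

theorem card_subtype_sumElim [Finite {a // f a = n}] [Finite {b // g b = n}] :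
    Nat.card {x // Sum.elim f g x = n} = Nat.card {a // f a = n} + Nat.card {b // g b = n} := by
  rw [Nat.card_congr (subtypeSumElimEquiv f g n), Nat.card_sum]

theorem finite_subtype_fst_bool [Finite {a // f a = n}] : Finite {x : α × Bool // f x.1 = n} :=
  Finite.of_equiv _ (Equiv.prodSubtypeFstEquivSubtypeProd (p := (f · = n)) (β := Bool)).symm

theorem card_subtype_fst_bool :
    Nat.card {x : α × Bool // f x.1 = n} = 2 * Nat.card {a // f a = n} := by
  rw [Nat.card_congr (Equiv.prodSubtypeFstEquivSubtypeProd (p := (f · = n)) (β := Bool)),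
    Nat.card_prod, Nat.card_eq_fintype_card (α := Bool), Fintype.card_bool, mul_comm]

theorem finite_subtype_two_mul [Finite {a // f a = n / 2}] : Finite {a // 2 * f a = n} :=
  Finite.of_injective (fun a => (⟨a.1, by omega⟩ : {a // f a = n / 2}))
    fun _ _ h => Subtype.ext (Subtype.mk.inj h)

theorem card_subtype_two_mul :
    Nat.card {a // 2 * f a = n} = if Even n then Nat.card {a // f a = n / 2} else 0 := by
  split_ifs with hn
  · obtain ⟨m, rfl⟩ := hn
    exact Nat.card_congr (Equiv.subtypeEquivRight fun a => by omega)
  · have : IsEmpty {a // 2 * f a = n} := ⟨fun a => hn ⟨f a, by omega⟩⟩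
    exact Nat.card_of_isEmpty

end Counting

/-- A cycle of length `0` is a copy of `ℤ`. -/
abbrev Cyl {I : Type} (len : I → ℕ) : Type := Σ i, ZMod (len i)

instance (n : ℕ) : Countable (ZMod n) := by
  cases n <;> dsimp only [ZMod] <;> infer_instance

namespace Cyl

variable {I : Type} (len : I → ℕ)

def shift : Equiv.Perm (Cyl len) := Equiv.sigmaCongrRight fun _ => Equiv.addRight 1

variable {len}

theorem shift_iterate (k : ℕ) (x : Cyl len) : (shift len)^[k] x = ⟨x.1, x.2 + k⟩ := by
  induction k with
  | zero => simp
  | succ k ih => rw [iterate_succ_apply', ih]; simp [shift, add_assoc]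

theorem shift_iterate_eq_self_iff {n : ℕ} {x : Cyl len} :
    (shift len)^[n] x = x ↔ len x.1 ∣ n := by
  rw [shift_iterate, ← ZMod.natCast_eq_zero_iff, Sigma.ext_iff]
  simp

theorem ncard_fiber (i : I) : {x : Cyl len | x.1 = i}.ncard = len i := by
  rw [← Nat.card_coe_set_eq, ← Nat.card_zmod (len i)]
  exact Nat.card_congr (Equiv.sigmaSubtype i)

theorem orbit_eq_fiber {n : ℕ} {x : Cyl len} (hpos : 0 < len x.1) (hle : len x.1 ≤ n) :
    {y | ∃ k < n, (shift len)^[k] x = y} = {y | y.1 = x.1} := by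
  obtain ⟨i, v⟩ := x
  have : NeZero (len i) := ⟨hpos.ne'⟩
  ext ⟨j, c⟩
  constructor
  · rintro ⟨k, -, hk⟩
    rw [← hk, shift_iterate]
    rfl
  · rintro (rfl : j = i)
    refine ⟨(c - v).val, (ZMod.val_lt _).trans_le hle, ?_⟩
    rw [shift_iterate, ZMod.natCast_zmod_val, add_sub_cancel]

theorem isClosedOrbit_shift_iff {n : ℕ} (hn : n ≠ 0) {τ : Set (Cyl len)} :
    IsClosedOrbit (shift len) n τ ↔ ∃ i, len i = n ∧ τ = {x | x.1 = i} := by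
  constructor
  · rintro ⟨x, hper, rfl, hcard⟩
    have hdvd := shift_iterate_eq_self_iff.mp hper
    have hpos : 0 < len x.1 := Nat.pos_of_dvd_of_pos hdvd (Nat.pos_of_ne_zero hn)
    rw [orbit_eq_fiber hpos (Nat.le_of_dvd (Nat.pos_of_ne_zero hn) hdvd)] at hcard ⊢
    exact ⟨x.1, (ncard_fiber x.1).symm.trans hcard, rfl⟩
  · rintro ⟨i, rfl, rfl⟩
    refine ⟨⟨i, 0⟩, shift_iterate_eq_self_iff.mpr dvd_rfl, ?_, ncard_fiber i⟩
    exact (orbit_eq_fiber (x := ⟨i, 0⟩) (Nat.pos_of_ne_zero hn) le_rfl).symm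

theorem numOrb_shift {n : ℕ} (hn : n ≠ 0) :
    numOrb (shift len) n = Nat.card {i // len i = n} := by
  let toOrbit : {i // len i = n} → {τ // IsClosedOrbit (shift len) n τ} := fun i =>
    ⟨{x | x.1 = i.1}, (isClosedOrbit_shift_iff hn).mpr ⟨i.1, i.2, rfl⟩⟩
  refine (Nat.card_eq_of_bijective toOrbit ⟨fun i j h => ?_, ?_⟩).symm
  · exact Subtype.ext ((Set.ext_iff.mp (congrArg Subtype.val h) ⟨i.1, 0⟩).mp rfl)
  · rintro ⟨τ, hτ⟩
    obtain ⟨i, hi, rfl⟩ := (isClosedOrbit_shift_iff hn).mp hτ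
    exact ⟨⟨i, hi⟩, rfl⟩

theorem finite_setOf_shift_iterate_eq_self (hfin : ∀ m, Finite {i // len i = m}) {n : ℕ}
    (hn : n ≠ 0) : {x | (shift len)^[n] x = x}.Finite := by
  have hind : {i | len i ∣ n}.Finite :=
    (n.divisors.finite_toSet.subset fun m hm => Nat.mem_divisors.mpr ⟨hm, hn⟩).preimage'
      fun m _ => Set.finite_coe_iff.mp (hfin m)
  refine (hind.preimage' fun i (hi : len i ∣ n) => ?_).subset fun x hx =>
    shift_iterate_eq_self_iff.mp hx
  have : NeZero (len i) := ⟨fun h => hn (Nat.eq_zero_of_zero_dvd (h ▸ hi))⟩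
  exact Set.finite_coe_iff.mp (Finite.of_equiv _ (Equiv.sigmaSubtype i).symm)

variable (len)

/-- The extra point `none` becomes a cycle of length `1`. -/
def optionEquiv : Option (Cyl len) ≃ Cyl (Option.elim' 1 len) where
  toFun
    | none => ⟨none, 0⟩
    | some ⟨i, k⟩ => ⟨some i, k⟩
  invFun
    | ⟨none, _⟩ => none
    | ⟨some i, k⟩ => some ⟨i, k⟩
  left_inv := by rintro (_ | ⟨i, k⟩) <;> rfl
  right_inv := by
    rintro ⟨_ | i, k⟩
    · exact congrArg (Sigma.mk none) (@Subsingleton.elim (ZMod 1) _ _ _)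
    · rfl

theorem semiconj_optionEquiv :
    Semiconj (optionEquiv len) (Option.map (shift len)) (shift (Option.elim' 1 len)) := by
  rintro (_ | ⟨i, k⟩)
  · exact congrArg (Sigma.mk none) (@Subsingleton.elim (ZMod 1) _ _ _)
  · rfl

variable {len}

theorem numOrb_optionMap_shift {n : ℕ} (hn : n ≠ 0) [Finite {i // len i = n}] :
    numOrb (Option.map (shift len)) n = Nat.card {i // len i = n} + if n = 1 then 1 else 0 := by
  rw [numOrb_eq_of_semiconj _ (semiconj_optionEquiv len), numOrb_shift hn,
    card_subtype_optionElim]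

theorem finite_setOf_optionMap_shift_iterate_eq_self (hfin : ∀ m, Finite {i // len i = m})
    {n : ℕ} (hn : n ≠ 0) : {x | (Option.map (shift len))^[n] x = x}.Finite := by
  refine finite_setOf_iterate_eq_self_of_semiconj _ (semiconj_optionEquiv len)
    (finite_setOf_shift_iterate_eq_self (fun m => ?_) hn)
  have := hfin m
  exact Finite.of_equiv _ (subtypeOptionElimEquiv len m).symm

end Cyl

theorem ZMod.natCast_val_castHom_two_mul {m : ℕ} [NeZero m] (k : ZMod (2 * m)) :
    ((ZMod.castHom (dvd_mul_left m 2) (ZMod m) k).val : ZMod (2 * m)) = k ∨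
      ((ZMod.castHom (dvd_mul_left m 2) (ZMod m) k).val : ZMod (2 * m)) = k + m := by
  have hk : ((k.val : ℕ) : ZMod (2 * m)) = k := ZMod.natCast_zmod_val k
  have hlt : k.val < 2 * m := ZMod.val_lt k
  rw [ZMod.castHom_apply, ZMod.cast_eq_val, ZMod.val_natCast]
  rcases lt_or_ge k.val m with h | h
  · left
    rw [Nat.mod_eq_of_lt h, hk]
  · right
    rw [Nat.mod_eq_sub_mod h, Nat.mod_eq_of_lt (by omega), Nat.cast_sub h, hk]
    have h2m : ((2 * m : ℕ) : ZMod (2 * m)) = 0 := ZMod.natCast_self _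
    push_cast at h2m
    linear_combination -h2m

theorem ZMod.add_natCast_add_natCast_of_two_mul {m : ℕ} (k : ZMod (2 * m)) : k + m + m = k := by
  rw [add_assoc, ← Nat.cast_add, ← two_mul, ZMod.natCast_self, add_zero]

theorem ZMod.castHom_two_mul_add_natCast {m : ℕ} (k : ZMod (2 * m)) :
    ZMod.castHom (dvd_mul_left m 2) (ZMod m) (k + m) =
      ZMod.castHom (dvd_mul_left m 2) (ZMod m) k := by
  rw [map_add, map_natCast, ZMod.natCast_self, add_zero]

section Halving

variable {X Y : Type*} {ι : X → X}

def halfMap (T : X → X) (h : Function.Commute ι T) : HalfQuot ι → HalfQuot ι :=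
  Quot.map T fun x _ hxy => hxy ▸ h x

def halfQuotEquiv (φ : X → Y) (ψ : Y → X) (hφι : ∀ x, φ (ι x) = φ x)
    (hφψ : LeftInverse φ ψ) (hψφ : ∀ x, ψ (φ x) = x ∨ ψ (φ x) = ι x) :
    HalfQuot ι ≃ Y where
  toFun := Quot.lift φ fun x _ hxy => hxy ▸ (hφι x).symm
  invFun y := halfProj ι (ψ y)
  left_inv := Quot.ind fun x => by
    change halfProj ι (ψ (φ x)) = halfProj ι x
    rcases hψφ x with h | h
    · rw [h]
    · rw [h]
      exact (Quot.sound (r := fun x y => ι x = y) rfl).symm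
  right_inv := hφψ

theorem semiconj_halfQuotEquiv {φ : X → Y} {ψ : Y → X} (hφι : ∀ x, φ (ι x) = φ x)
    (hφψ : LeftInverse φ ψ) (hψφ : ∀ x, ψ (φ x) = x ∨ ψ (φ x) = ι x) {T : X → X}
    (hT : Function.Commute ι T) {S : Y → Y} (hφ : Semiconj φ T S) :
    Semiconj (halfQuotEquiv φ ψ hφι hφψ hψφ) (halfMap T hT) S :=
  Quot.ind hφ

end Halving

namespace HalvingModel

variable {S G H : Type} (ls : S → ℕ) (lg : G → ℕ) (lh : H → ℕ)

abbrev lenX : S ⊕ G × Bool ⊕ H → ℕ :=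
  Sum.elim ls (Sum.elim (fun g => lg g.1) fun h => 2 * lh h)

abbrev lenY : S ⊕ G ⊕ H → ℕ := Sum.elim ls (Sum.elim lg lh)

def invol : Cyl (lenX ls lg lh) → Cyl (lenX ls lg lh)
  | ⟨.inl s, k⟩ => ⟨.inl s, k⟩
  | ⟨.inr (.inl (g, b)), k⟩ => ⟨.inr (.inl (g, !b)), k⟩
  | ⟨.inr (.inr h), k⟩ => ⟨.inr (.inr h), (k : ZMod (2 * lh h)) + lh h⟩

def proj : Cyl (lenX ls lg lh) → Cyl (lenY ls lg lh)
  | ⟨.inl s, k⟩ => ⟨.inl s, k⟩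
  | ⟨.inr (.inl (g, _)), k⟩ => ⟨.inr (.inl g), k⟩
  | ⟨.inr (.inr h), k⟩ => ⟨.inr (.inr h), ZMod.castHom (dvd_mul_left (lh h) 2) _ k⟩

def sect : Cyl (lenY ls lg lh) → Cyl (lenX ls lg lh)
  | ⟨.inl s, k⟩ => ⟨.inl s, k⟩
  | ⟨.inr (.inl g), k⟩ => ⟨.inr (.inl (g, false)), k⟩
  | ⟨.inr (.inr h), k⟩ => ⟨.inr (.inr h), (k.val : ZMod (2 * lh h))⟩

theorem invol_involutive : Involutive (invol ls lg lh) := by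
  rintro ⟨s | ⟨g, _ | _⟩ | h, k⟩
  · rfl
  · rfl
  · rfl
  · exact congrArg (Sigma.mk _) (ZMod.add_natCast_add_natCast_of_two_mul k)

theorem commute_invol_shift : Function.Commute (invol ls lg lh) (Cyl.shift _) := by
  rintro ⟨s | ⟨g, b⟩ | h, k⟩
  · rfl
  · rfl
  · exact congrArg (Sigma.mk _) (add_right_comm (k : ZMod (2 * lh h)) _ _)

theorem proj_invol (x : Cyl (lenX ls lg lh)) :
    proj ls lg lh (invol ls lg lh x) = proj ls lg lh x := by
  rcases x with ⟨s | ⟨g, b⟩ | h, k⟩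
  · rfl
  · rfl
  · exact congrArg (Sigma.mk _) (ZMod.castHom_two_mul_add_natCast k)

theorem semiconj_proj_shift : Semiconj (proj ls lg lh) (Cyl.shift _) (Cyl.shift _) := by
  rintro ⟨s | ⟨g, b⟩ | h, k⟩
  · rfl
  · rfl
  · exact congrArg (Sigma.mk _)
      ((map_add _ (k : ZMod (2 * lh h)) 1).trans (congrArg _ (map_one _)))

section Counting

variable [∀ m, Finite {s // ls s = m}] [∀ m, Finite {g // lg g = m}]
  [∀ m, Finite {h // lh h = m}]

theorem finite_subtype_lenX (n : ℕ) : Finite {i // lenX ls lg lh i = n} :=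
  have := finite_subtype_fst_bool lg n
  have := finite_subtype_two_mul lh n
  have := finite_subtype_sumElim (fun g : G × Bool => lg g.1) (fun h => 2 * lh h) n
  finite_subtype_sumElim ..

theorem finite_subtype_lenY (n : ℕ) : Finite {i // lenY ls lg lh i = n} :=
  have := finite_subtype_sumElim lg lh n
  finite_subtype_sumElim ..

theorem card_subtype_lenX (n : ℕ) :
    Nat.card {i // lenX ls lg lh i = n} = Nat.card {s // ls s = n} +
      (2 * Nat.card {g // lg g = n} + if Even n then Nat.card {h // lh h = n / 2} else 0) := by
  have := finite_subtype_fst_bool lg n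
  have := finite_subtype_two_mul lh n
  have := finite_subtype_sumElim (fun g : G × Bool => lg g.1) (fun h => 2 * lh h) n
  rw [card_subtype_sumElim, card_subtype_sumElim, card_subtype_fst_bool, card_subtype_two_mul]

theorem card_subtype_lenY (n : ℕ) :
    Nat.card {i // lenY ls lg lh i = n} =
      Nat.card {s // ls s = n} + (Nat.card {g // lg g = n} + Nat.card {h // lh h = n}) := by
  have := finite_subtype_sumElim lg lh n
  rw [card_subtype_sumElim, card_subtype_sumElim]

end Counting

variable {lh} (hlh : ∀ h, lh h ≠ 0)
include hlh

theorem leftInverse_proj_sect : LeftInverse (proj ls lg lh) (sect ls lg lh) := by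
  rintro ⟨s | g | h, k⟩
  · rfl
  · rfl
  · have : NeZero (lh h) := ⟨hlh h⟩
    exact congrArg (Sigma.mk _) ((map_natCast _ k.val).trans (ZMod.natCast_zmod_val (n := lh h) k))

theorem sect_proj (x : Cyl (lenX ls lg lh)) :
    sect ls lg lh (proj ls lg lh x) = x ∨ sect ls lg lh (proj ls lg lh x) = invol ls lg lh x := by
  rcases x with ⟨s | ⟨g, _ | _⟩ | h, k⟩
  · exact .inl rfl
  · exact .inl rfl
  · exact .inr rfl
  · have : NeZero (lh h) := ⟨hlh h⟩
    rcases ZMod.natCast_val_castHom_two_mul k with e | e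
    · exact .inl (congrArg (Sigma.mk _) e)
    · exact .inr (congrArg (Sigma.mk _) e)

def halfQuotOptionEquiv :
    HalfQuot (Option.map (invol ls lg lh)) ≃ Option (Cyl (lenY ls lg lh)) :=
  halfQuotEquiv (Option.map (proj ls lg lh)) (Option.map (sect ls lg lh))
    (by rintro (_ | x); exacts [rfl, congrArg some (proj_invol ls lg lh x)])
    (by rintro (_ | y); exacts [rfl, congrArg some (leftInverse_proj_sect ls lg hlh y)])
    (by rintro (_ | x)
        exacts [.inl rfl, (sect_proj ls lg hlh x).imp (congrArg some) (congrArg some)])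

theorem numOrb_halfMap {n : ℕ} (hn : n ≠ 0) [Finite {i // lenY ls lg lh i = n}] :
    numOrb (halfMap _ (commute_invol_shift ls lg lh).option_map) n =
      Nat.card {i // lenY ls lg lh i = n} + if n = 1 then 1 else 0 := by
  rw [numOrb_eq_of_semiconj (halfQuotOptionEquiv ls lg hlh)
    (semiconj_halfQuotEquiv _ _ _ _ (semiconj_proj_shift ls lg lh).option_map),
    Cyl.numOrb_optionMap_shift hn]

end HalvingModel

/-- `b n` indices of length `n` for every `n ≥ 1` (the value `b 0` plays no role). -/
abbrev CountedIndex (b : ℕ → ℕ) : Type := Σ k, Fin (b (k + 1))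

namespace CountedIndex

variable {b : ℕ → ℕ}

def len (x : CountedIndex b) : ℕ := x.1 + 1

theorem len_ne_zero (x : CountedIndex b) : x.len ≠ 0 := Nat.succ_ne_zero _

def subtypeLenEquiv {n : ℕ} (hn : n ≠ 0) : {x : CountedIndex b // x.len = n} ≃ Fin (b n) :=
  (Equiv.subtypeEquivRight fun x : CountedIndex b => show x.1 + 1 = n ↔ x.1 = n - 1 by omega)
    |>.trans (Equiv.sigmaSubtype (n - 1)) |>.trans (finCongr (congrArg b (by omega)))

instance (n : ℕ) : Finite {x : CountedIndex b // x.len = n} := by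
  rcases eq_or_ne n 0 with rfl | hn
  · have : IsEmpty {x : CountedIndex b // x.len = 0} := ⟨fun x => len_ne_zero x.1 x.2⟩
    infer_instance
  · exact Finite.of_equiv _ (subtypeLenEquiv hn).symm

theorem card_subtype_len_eq {n : ℕ} (hn : n ≠ 0) :
    Nat.card {x : CountedIndex b // x.len = n} = b n := by
  rw [Nat.card_congr (subtypeLenEquiv hn), Nat.card_eq_fintype_card, Fintype.card_fin]

end CountedIndex

namespace HalvingModel

variable (p q r : ℕ → ℕ) {n : ℕ} (hn : n ≠ 0)
include hn

theorem card_subtype_lenX_countedIndex :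
    Nat.card {i // lenX (CountedIndex.len (b := p)) (CountedIndex.len (b := q))
      (CountedIndex.len (b := r)) i = n} = p n + (2 * q n + if Even n then r (n / 2) else 0) := by
  have hr : Even n → Nat.card {x : CountedIndex r // x.len = n / 2} = r (n / 2) :=
    fun ⟨k, hk⟩ => CountedIndex.card_subtype_len_eq (by omega)
  rw [card_subtype_lenX, CountedIndex.card_subtype_len_eq hn, CountedIndex.card_subtype_len_eq hn,
    ite_congr rfl hr fun _ => rfl]

theorem card_subtype_lenY_countedIndex :
    Nat.card {i // lenY (CountedIndex.len (b := p)) (CountedIndex.len (b := q))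
      (CountedIndex.len (b := r)) i = n} = p n + (q n + r n) := by
  rw [card_subtype_lenY, CountedIndex.card_subtype_len_eq hn, CountedIndex.card_subtype_len_eq hn,
    CountedIndex.card_subtype_len_eq hn]

end HalvingModel

theorem OnePoint.metrizableSpace_of_countable (Z : Type*) [TopologicalSpace Z] [DiscreteTopology Z]
    [Countable Z] : TopologicalSpace.MetrizableSpace (OnePoint Z) := by
  obtain ⟨e, he⟩ := exists_injective_nat Z
  have hcont : Continuous (OnePoint.map e) := by
    refine OnePoint.continuous_map continuous_of_discreteTopology ?_
    simpa only [Filter.coclosedCompact_eq_cocompact, Filter.cocompact_eq_cofinite]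
      using he.tendsto_cofinite
  exact (hcont.isClosedEmbedding (Option.map_injective he)).metrizableSpace

open HalvingModel in
theorem statement11 (bs bg bh : ℕ → ℕ) (hbs1 : 0 < bs 1) :
    ∃ (X : Type) (_ : MetricSpace X) (_ : CompactSpace X) (T : X ≃ₜ X) (ι : X → X),
      Continuous ι ∧ ι ∘ ι = id ∧ ι ∘ ⇑T = ⇑T ∘ ι ∧ (∃ x : X, T x = x) ∧
      (∀ n : ℕ, 1 ≤ n → {x : X | (⇑T)^[n] x = x}.Finite) ∧
      (∀ n : ℕ, 1 ≤ n →
        numOrb (⇑T) n = bs n + 2 * bg n + (if Even n then bh (n / 2) else 0)) ∧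
      ∃ Tbar : HalfQuot ι → HalfQuot ι,
        (∀ x : X, Tbar (halfProj ι x) = halfProj ι (T x)) ∧
        (∀ n : ℕ, 1 ≤ n → numOrb Tbar n = bs n + bg n + bh n) := by
  -- the point at infinity is one of the fixed points counted by `bs 1`
  set bs' := Function.update bs 1 (bs 1 - 1)
  have hbs' (n : ℕ) : bs' n + (if n = 1 then 1 else 0) = bs n := by
    rcases eq_or_ne n 1 with rfl | h
    · simp [bs']; omega
    · simp [bs', h]
  let ls := @CountedIndex.len bs'
  let lg := @CountedIndex.len bg
  let lh := @CountedIndex.len bh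
  let _ : TopologicalSpace (Cyl (lenX ls lg lh)) := ⊥
  have : DiscreteTopology (Cyl (lenX ls lg lh)) := ⟨rfl⟩
  have := OnePoint.metrizableSpace_of_countable (Cyl (lenX ls lg lh))
  have hι : Continuous (OnePoint.map (invol ls lg lh)) :=
    (Involutive.toPerm _ (invol_involutive ls lg lh)).toHomeomorphOfDiscrete
      |>.onePointCongr.continuous
  have hcomm := (commute_invol_shift ls lg lh).option_map
  refine ⟨OnePoint (Cyl (lenX ls lg lh)), TopologicalSpace.metrizableSpaceMetric _,
    inferInstance, (Cyl.shift _).toHomeomorphOfDiscrete.onePointCongr, _, hι, ?_, hcomm.comp_eq,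
    ⟨none, rfl⟩, fun n hn => ?_, fun n hn => ?_, halfMap _ hcomm, fun _ => rfl,
    fun n hn => ?_⟩
  · rw [← OnePoint.map_comp, (invol_involutive ls lg lh).comp_self, OnePoint.map_id]
  · exact Cyl.finite_setOf_optionMap_shift_iterate_eq_self (finite_subtype_lenX ls lg lh)
      (by omega)
  · have := finite_subtype_lenX ls lg lh n
    refine (Cyl.numOrb_optionMap_shift (len := lenX ls lg lh) (by omega)).trans ?_
    rw [card_subtype_lenX_countedIndex bs' bg bh (by omega), ← hbs' n]
    ring
  · have := finite_subtype_lenY ls lg lh n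
    refine (numOrb_halfMap ls lg CountedIndex.len_ne_zero (n := n) (by omega)).trans ?_
    rw [card_subtype_lenY_countedIndex bs' bg bh (by omega), ← hbs' n]
    ring
end

section
/- Let Y be a set and S : Y → Y a bijection such that for each n ≥ 1 the set of y ∈ Y with S^n(y) = y is finite, and let T be the doubled map on X = Y × ℤ/2ℤ given by T(y,e) = (S(y), e+1). Then in the ring of formal power series over ℚ one has ζ_T(z) = ζ_S(z)·ζ_S(−z), where ζ_S(−z) denotes the power series obtained from ζ_S by substituting −z for z. -/
open Function

/-- The formal exponential `exp f = ∑_k f^k / k!` of a power series `f` over `ℚ`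
(defined coefficientwise; for `f` with zero constant term only the terms with
`k ≤ n` contribute to the `n`-th coefficient). -/
noncomputable def expPS (f : PowerSeries ℚ) : PowerSeries ℚ :=
  PowerSeries.mk fun n =>
    ∑ k ∈ Finset.range (n + 1), PowerSeries.coeff (R := ℚ) n (f ^ k) / (Nat.factorial k : ℚ)

/-- The dynamical zeta function `ζ_T(z) = exp (∑_{n ≥ 1} F_T(n) zⁿ / n)`. -/
noncomputable def dynZeta {X : Type*} (T : X → X) : PowerSeries ℚ :=
  expPS (PowerSeries.mk fun n => if n = 0 then 0 else (numPer T n : ℚ) / n)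

/-- A formal power series over `ℚ` is rational if `q * f = p` for polynomials
`p`, `q` with `q` having nonzero constant term. -/
def IsRationalPS (f : PowerSeries ℚ) : Prop :=
  ∃ p q : Polynomial ℚ, q.coeff 0 ≠ 0 ∧ (q : PowerSeries ℚ) * f = (p : PowerSeries ℚ)

/-!
The series `log ζ_T = ∑ F_T(n) zⁿ / n` is additive in the following sense: the points of period
`n` of `T = S × (e ↦ e + 1)` are pairs of such points, so `F_T(n) = 2 F_S(n)` for even `n` and
`F_T(n) = 0` for odd `n`, i.e. `log ζ_T(z) = log ζ_S(z) + log ζ_S(-z)`. It remains to see that the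
formal exponential turns sums into products; modulo `X^N` a series without constant term is
nilpotent, and there this is the functional equation of the exponential of nilpotent elements.
-/

open PowerSeries Finset

section FormalExp

variable {f g : ℚ⟦X⟧}

local notation "mkModXPow" N => Ideal.Quotient.mkₐ ℚ (Ideal.span {(X : ℚ⟦X⟧) ^ N})

lemma X_pow_dvd_pow_of_constantCoeff_eq_zero {R : Type*} [CommSemiring R] {f : R⟦X⟧}
    (hf : constantCoeff f = 0) (k : ℕ) : X ^ k ∣ f ^ k :=
  pow_dvd_pow_of_dvd (X_dvd_iff.2 hf) k

lemma coeff_expPS_eq_coeff_sum_range (hf : constantCoeff f = 0) {n N : ℕ} (hN : n < N) :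
    coeff n (expPS f) = coeff n (∑ k ∈ range N, (k.factorial : ℚ)⁻¹ • f ^ k) := by
  simp only [expPS, coeff_mk, map_sum, coeff_smul, smul_eq_mul, div_eq_inv_mul]
  refine sum_subset (range_subset_range.2 hN) fun k _ hk => ?_
  have hnk : n < k := by simpa using hk
  rw [X_pow_dvd_iff.1 (X_pow_dvd_pow_of_constantCoeff_eq_zero hf k) n hnk, mul_zero]

lemma mkModXPow_pow_self (hf : constantCoeff f = 0) (N : ℕ) :
    (mkModXPow N) f ^ N = 0 := by
  rw [← map_pow, Ideal.Quotient.mkₐ_eq_mk, Ideal.Quotient.eq_zero_iff_mem,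
    Ideal.mem_span_singleton]
  exact X_pow_dvd_pow_of_constantCoeff_eq_zero hf N

lemma mkModXPow_expPS (hf : constantCoeff f = 0) (N : ℕ) :
    (mkModXPow N) (expPS f) = IsNilpotent.exp ((mkModXPow N) f) := by
  rw [IsNilpotent.exp_eq_sum (mkModXPow_pow_self hf N)]
  simp only [← map_pow, ← map_smul, ← map_sum]
  rw [Ideal.Quotient.mkₐ_eq_mk, Ideal.Quotient.eq, Ideal.mem_span_singleton, X_pow_dvd_iff]
  intro n hn
  rw [map_sub, coeff_expPS_eq_coeff_sum_range hf hn, sub_self]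

theorem expPS_add (hf : constantCoeff f = 0) (hg : constantCoeff g = 0) :
    expPS (f + g) = expPS f * expPS g := by
  ext n
  have hfg : constantCoeff (f + g) = 0 := by rw [map_add, hf, hg, add_zero]
  have h : (mkModXPow (n + 1)) (expPS (f + g)) = (mkModXPow (n + 1)) (expPS f * expPS g) := by
    rw [map_mul, mkModXPow_expPS hfg, mkModXPow_expPS hf, mkModXPow_expPS hg,
      map_add, IsNilpotent.exp_add_of_commute (Commute.all _ _)
        ⟨_, mkModXPow_pow_self hf _⟩ ⟨_, mkModXPow_pow_self hg _⟩]
  rw [Ideal.Quotient.mkₐ_eq_mk, Ideal.Quotient.eq, Ideal.mem_span_singleton, X_pow_dvd_iff] at h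
  simpa only [map_sub, sub_eq_zero] using h n n.lt_succ_self

end FormalExp

lemma constantCoeff_rescale {R : Type*} [CommSemiring R] (a : R) (f : R⟦X⟧) :
    constantCoeff (rescale a f) = constantCoeff f := by
  rw [← coeff_zero_eq_constantCoeff_apply, coeff_rescale, pow_zero, one_mul,
    coeff_zero_eq_constantCoeff_apply]

lemma rescale_expPS (a : ℚ) (f : ℚ⟦X⟧) : rescale a (expPS f) = expPS (rescale a f) := by
  ext n
  simp only [coeff_rescale, expPS, coeff_mk, mul_sum, ← map_pow, mul_div_assoc]

lemma numPer_prodMap {α β : Type*} (f : α → α) (g : β → β) (n : ℕ) :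
    numPer (Prod.map f g) n = numPer f n * numPer g n := by
  rw [numPer, numPer, numPer, ← Nat.card_prod, Prod.map_iterate]
  exact Nat.card_congr ((Equiv.subtypeEquivRight fun p =>
    show _ ↔ f^[n] p.1 = p.1 ∧ g^[n] p.2 = p.2 from Prod.ext_iff).trans
      (Equiv.subtypeProdEquivProd (p := fun a => f^[n] a = a) (q := fun b => g^[n] b = b)))

lemma numPer_zmod_add_one (m n : ℕ) :
    numPer (fun e : ZMod m => e + 1) n = if m ∣ n then m else 0 := by
  have hfix : ∀ e : ZMod m, (· + 1)^[n] e = e ↔ m ∣ n := fun e => by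
    rw [add_right_iterate_apply, add_eq_left, nsmul_one, ZMod.natCast_eq_zero_iff]
  rw [numPer, Nat.card_congr (Equiv.subtypeEquivRight hfix)]
  split_ifs with h
  · simp [h, Nat.card_zmod]
  · simp [h]

noncomputable def logDynZeta {α : Type*} (T : α → α) : ℚ⟦X⟧ :=
  mk fun n => if n = 0 then 0 else (numPer T n : ℚ) / n

lemma constantCoeff_logDynZeta {α : Type*} (T : α → α) : constantCoeff (logDynZeta T) = 0 := by
  simp [logDynZeta, ← coeff_zero_eq_constantCoeff_apply]

lemma logDynZeta_prodMap_zmod_two {α : Type*} (S : α → α) :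
    logDynZeta (Prod.map S fun e : ZMod 2 => e + 1) =
      logDynZeta S + rescale (-1) (logDynZeta S) := by
  ext n
  simp only [logDynZeta, coeff_mk, map_add, coeff_rescale, numPer_prodMap, numPer_zmod_add_one]
  rcases eq_or_ne n 0 with rfl | hn
  · simp
  simp only [if_neg hn]
  rcases Nat.even_or_odd n with h | h
  · rw [if_pos h.two_dvd, h.neg_one_pow]
    push_cast
    ring
  · rw [if_neg (Nat.not_even_iff_odd.2 h ∘ even_iff_two_dvd.2), h.neg_one_pow]
    push_cast
    ring

theorem statement15_general {Y : Type*} (S : Y → Y) :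
    dynZeta (fun p : Y × ZMod 2 => (S p.1, p.2 + 1)) =
      dynZeta S * PowerSeries.rescale (-1) (dynZeta S) := by
  change expPS (logDynZeta (Prod.map S fun e : ZMod 2 => e + 1)) =
    expPS (logDynZeta S) * rescale (-1) (expPS (logDynZeta S))
  rw [logDynZeta_prodMap_zmod_two, rescale_expPS, expPS_add (constantCoeff_logDynZeta S)
    (by rw [constantCoeff_rescale, constantCoeff_logDynZeta])]

theorem statement15 {Y : Type*} (S : Y → Y) (hS : Function.Bijective S)
    (hfin : ∀ n : ℕ, 1 ≤ n → {y : Y | S^[n] y = y}.Finite) :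
    dynZeta (fun p : Y × ZMod 2 => (S p.1, p.2 + 1)) =
      dynZeta S * PowerSeries.rescale (-1) (dynZeta S) :=
  statement15_general S
end

section
/- The formal power series θ(z) = exp(Σ_{n≥1} σ(n)·z^n/n) over ℚ, where σ(n) = Σ_{d|n} d is the sum-of-divisors function, is not rational: there exist no polynomials p, q with rational coefficients, q with nonzero constant term, such that q(z)·θ(z) = p(z) as formal power series. -/
/-- `θ(z) = exp (∑_{n ≥ 1} σ(n) zⁿ / n)`, where `σ(n) = ∑_{d ∣ n} d`. -/
noncomputable def theta : PowerSeries ℚ :=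
  expPS (PowerSeries.mk fun n =>
    if n = 0 then 0 else ((∑ d ∈ n.divisors, d : ℕ) : ℚ) / n)

open PowerSeries Filter Finset
open scoped Polynomial ArithmeticFunction.sigma

lemma expPS_eq_subst_exp {f : ℚ⟦X⟧} (hf : constantCoeff f = 0) :
    expPS f = (exp ℚ).subst f := by
  ext n
  rw [expPS, coeff_mk, coeff_subst' (HasSubst.of_constantCoeff_zero' hf),
    finsum_eq_sum_of_support_subset (s := range (n + 1))]
  · refine sum_congr rfl fun k _ => ?_
    simp [div_eq_inv_mul]
  · intro k hk
    by_contra hkn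
    have hnk : (n : ℕ∞) < (f ^ k).order :=
      (by simpa using hkn : (n : ℕ∞) < k).trans_le (le_order_pow_of_constantCoeff_eq_zero k hf)
    exact hk (by simp [coeff_of_lt_order n hnk])

lemma derivative_expPS {f : ℚ⟦X⟧} (hf : constantCoeff f = 0) :
    d⁄dX ℚ (expPS f) = d⁄dX ℚ f * expPS f := by
  rw [expPS_eq_subst_exp hf, derivative_subst (HasSubst.of_constantCoeff_zero' hf), derivative_exp,
    mul_comm]

@[simp]
lemma constantCoeff_expPS (f : ℚ⟦X⟧) : constantCoeff (expPS f) = 1 := by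
  rw [← coeff_zero_eq_constantCoeff_apply, expPS, coeff_mk]
  simp

lemma Derivation.mul_mul_eq_of_apply_eq_mul {R A : Type*} [CommRing R] [CommRing A] [Algebra R A]
    (D : Derivation R A A) {θ g p q : A} (hθ : D θ = g * θ) (h : q * θ = p) :
    g * (q * p) = q * D p - D q * p := by
  subst h
  rw [D.leibniz, hθ, smul_eq_mul, smul_eq_mul]
  ring

noncomputable def sigmaSeries (R : Type*) [Semiring R] : R⟦X⟧ :=
  mk fun n => (σ 1 (n + 1) : R)

@[simp]
lemma map_sigmaSeries {R S : Type*} [Semiring R] [Semiring S] (f : R →+* S) :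
    map f (sigmaSeries R) = sigmaSeries S := by
  ext
  simp [sigmaSeries]

lemma derivative_theta : d⁄dX ℚ theta = sigmaSeries ℚ * theta := by
  rw [theta, derivative_expPS (by simp [← coeff_zero_eq_constantCoeff_apply])]
  congr 1
  ext n
  rw [coeff_derivative, coeff_mk, if_neg n.succ_ne_zero, sigmaSeries, coeff_mk,
    ArithmeticFunction.sigma_one_apply, Nat.cast_add_one]
  field_simp

def EventuallyPeriodic {α : Type*} (s : ℕ → α) : Prop :=
  ∃ T > 0, ∀ᶠ n in atTop, s (n + T) = s n

lemma eventually_forall_add_mul_eq {α : Type*} {s : ℕ → α} {T : ℕ}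
    (h : ∀ᶠ n in atTop, s (n + T) = s n) : ∀ᶠ n in atTop, ∀ k, s (n + k * T) = s n := by
  obtain ⟨N, hN⟩ := eventually_atTop.1 h
  refine eventually_atTop.2 ⟨N, fun n hn k => ?_⟩
  induction k with
  | zero => simp
  | succ k ih => rw [add_mul, one_mul, ← add_assoc, hN _ (by omega), ih]

lemma Polynomial.exists_dvd_X_pow_sub_one {K : Type*} [Field K] [Finite K] {B : K[X]}
    (hB : B.coeff 0 ≠ 0) : ∃ T, 0 < T ∧ B ∣ X ^ T - 1 := by
  have hB0 : B ≠ 0 := fun h => hB (by simp [h])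
  have := (AdjoinRoot.powerBasis hB0).finite
  have : Finite (AdjoinRoot B) := Module.finite_of_finite K
  obtain ⟨a, b, hab⟩ : IsCoprime X B :=
    (Irreducible.coprime_iff_not_dvd irreducible_X).mpr (by rwa [X_dvd_iff])
  obtain ⟨u, hu⟩ : IsUnit (AdjoinRoot.root B) := by
    refine IsUnit.of_mul_eq_one (AdjoinRoot.mk B a) ?_
    simpa [AdjoinRoot.mk_self, mul_comm] using congrArg (AdjoinRoot.mk B) hab
  refine ⟨orderOf u, (isOfFinOrder_of_finite u).orderOf_pos, ?_⟩
  rw [← AdjoinRoot.mk_eq_zero, map_sub, map_pow, AdjoinRoot.mk_X, ← hu, ← Units.val_pow_eq_pow_val,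
    pow_orderOf_eq_one]
  simp

lemma eventuallyPeriodic_coeff_of_mul_eq_coe {K : Type*} [Field K] [Finite K] {F : K⟦X⟧}
    {B A : K[X]} (hB : B.coeff 0 ≠ 0) (h : (B : K⟦X⟧) * F = A) :
    EventuallyPeriodic fun n => coeff n F := by
  obtain ⟨T, hT, C, hC⟩ := Polynomial.exists_dvd_X_pow_sub_one hB
  have hF : (X ^ T - 1) * F = ((C * A : K[X]) : K⟦X⟧) := by
    have := congrArg (fun P : K[X] => (P : K⟦X⟧)) hC
    simp only [Polynomial.coe_sub, Polynomial.coe_pow, Polynomial.coe_X, Polynomial.coe_one,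
      Polynomial.coe_mul] at this
    rw [this, Polynomial.coe_mul, ← h]
    ring
  refine ⟨T, hT, eventually_atTop.2 ⟨(C * A).natDegree, fun n hn => ?_⟩⟩
  have := congrArg (coeff (n + T)) hF
  rw [sub_mul, map_sub, one_mul, coeff_X_pow_mul', if_pos (by omega), Nat.add_sub_cancel,
    Polynomial.coeff_coe, Polynomial.coeff_eq_zero_of_natDegree_lt (by omega), sub_eq_zero] at this
  exact this.symm

lemma exists_coe_eq_of_map_eq_coe {R S : Type*} [CommSemiring R] [CommSemiring S] {f : R →+* S}
    (hf : Function.Injective f) {G : R⟦X⟧} {A : S[X]} (h : map f G = A) :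
    ∃ A' : R[X], G = A' := by
  refine ⟨trunc (A.natDegree + 1) G, ?_⟩
  ext n
  rw [Polynomial.coeff_coe, coeff_trunc]
  split_ifs with hn
  · rfl
  · apply hf
    rw [← coeff_map, h, Polynomial.coeff_coe,
      Polynomial.coeff_eq_zero_of_natDegree_lt (by omega), _root_.map_zero]

lemma exists_int_mul_eq_coe_of_rat_mul_eq_coe {F : ℤ⟦X⟧} {B A : ℚ[X]} (hB : B.coeff 0 ≠ 0)
    (h : (B : ℚ⟦X⟧) * map (Int.castRingHom ℚ) F = A) :
    ∃ B' A' : ℤ[X], B'.coeff 0 ≠ 0 ∧ (B' : ℤ⟦X⟧) * F = A' := by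
  obtain ⟨c, hc, hcB⟩ := IsLocalization.integerNormalization_spec (nonZeroDivisors ℤ) B
  set B' := IsLocalization.integerNormalization (nonZeroDivisors ℤ) B
  rw [algebraMap_int_eq] at hcB
  have hmap : map (Int.castRingHom ℚ) (B' * F) = ((c • A : ℚ[X]) : ℚ⟦X⟧) := by
    rw [map_mul, ← Polynomial.polynomial_map_coe, hcB, ← Int.cast_smul_eq_zsmul ℚ,
      ← Int.cast_smul_eq_zsmul ℚ, Polynomial.coe_smul, Polynomial.coe_smul, smul_mul_assoc, h]
  obtain ⟨A', hA'⟩ := exists_coe_eq_of_map_eq_coe (RingHom.injective_int _) hmap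
  refine ⟨B', A', fun h0 => ?_, hA'⟩
  have := congrArg (Polynomial.coeff · 0) hcB
  simp only [Polynomial.coeff_map, Polynomial.coeff_smul, eq_intCast, h0, Int.cast_zero] at this
  rw [zsmul_eq_mul] at this
  exact mul_ne_zero (Int.cast_ne_zero.2 (nonZeroDivisors.ne_zero hc)) hB this.symm

lemma exists_prime_eventuallyPeriodic_coeff {F : ℤ⟦X⟧} {B A : ℤ[X]} (hB : B.coeff 0 ≠ 0)
    (h : (B : ℤ⟦X⟧) * F = A) :
    ∃ ℓ, ℓ.Prime ∧ EventuallyPeriodic fun n => ((coeff n F : ℤ) : ZMod ℓ) := by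
  obtain ⟨ℓ, hℓ, hℓp⟩ := Nat.exists_infinite_primes ((B.coeff 0).natAbs + 1)
  have := Fact.mk hℓp
  refine ⟨ℓ, hℓp, ?_⟩
  have hB' : (B.map (Int.castRingHom (ZMod ℓ))).coeff 0 ≠ 0 := by
    rw [Polynomial.coeff_map, eq_intCast, ne_eq, ZMod.intCast_zmod_eq_zero_iff_dvd]
    intro hdvd
    have := Int.natAbs_le_of_dvd_ne_zero hdvd hB
    simp only [Int.natAbs_natCast] at this
    omega
  simpa using eventuallyPeriodic_coeff_of_mul_eq_coe hB'
    (F := map (Int.castRingHom (ZMod ℓ)) F) (A := A.map (Int.castRingHom (ZMod ℓ)))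
    (by rw [Polynomial.polynomial_map_coe, Polynomial.polynomial_map_coe, ← map_mul, h])

lemma sigma_one_prime_pow_cast {p : ℕ} (hp : p.Prime) (i : ℕ) :
    ((σ 1 (p ^ i) : ℕ) : ZMod p) = 1 := by
  rw [ArithmeticFunction.sigma_one_apply_prime_pow hp, Nat.cast_sum, sum_range_succ']
  simp

lemma not_eventuallyPeriodic_sigma_succ {ℓ : ℕ} (hℓ : ℓ.Prime) :
    ¬ EventuallyPeriodic fun n => ((σ 1 (n + 1) : ℕ) : ZMod ℓ) := by
  rintro ⟨T, hT, h⟩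
  obtain ⟨N, hN⟩ := eventually_atTop.1
    (eventually_forall_add_mul_eq (s := fun n => ((σ 1 (n + 1) : ℕ) : ZMod ℓ)) h)
  obtain ⟨q, hq, hℓq, hq1⟩ := Nat.exists_prime_gt_modEq_one ℓ hT.ne'
  obtain ⟨k, hk⟩ : T ∣ ℓ ^ (N + 1) * (q - 1) :=
    dvd_mul_of_dvd_right ((Nat.modEq_iff_dvd' hq.one_lt.le).1 hq1.symm) _
  have hN' : N + 1 < ℓ ^ (N + 1) := Nat.lt_pow_self hℓ.one_lt
  have hshift : ℓ ^ (N + 1) - 1 + k * T + 1 = ℓ ^ (N + 1) * q := by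
    have : ℓ ^ (N + 1) ≤ ℓ ^ (N + 1) * q := Nat.le_mul_of_pos_right _ hq.pos
    rw [mul_comm k, ← hk, Nat.mul_sub_one]
    omega
  have hcop : (ℓ ^ (N + 1)).Coprime q :=
    Nat.Coprime.pow_left _ ((Nat.coprime_primes hℓ hq).mpr hℓq.ne)
  have hσq : σ 1 q = q + 1 := by simpa using ArithmeticFunction.sigma_one_apply_prime_pow hq (i := 1)
  have key := hN (ℓ ^ (N + 1) - 1) (by omega) k
  rw [hshift, Nat.sub_add_cancel (by omega),
    ArithmeticFunction.isMultiplicative_sigma.map_mul_of_coprime hcop, hσq] at key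
  simp only [Nat.cast_mul, sigma_one_prime_pow_cast hℓ, Nat.cast_add, Nat.cast_one, one_mul,
    add_eq_right] at key
  exact hℓq.ne ((Nat.prime_dvd_prime_iff_eq hℓ hq).1 ((ZMod.natCast_eq_zero_iff q ℓ).1 key))

theorem statement16 :
    ¬ ∃ p q : Polynomial ℚ, q.coeff 0 ≠ 0 ∧
      (q : PowerSeries ℚ) * theta = (p : PowerSeries ℚ) := by
  rintro ⟨p, q, hq, hqp⟩
  have hp : p.coeff 0 = q.coeff 0 := by
    simpa [theta] using (congrArg constantCoeff hqp).symm
  have hrat : ((q * p : ℚ[X]) : ℚ⟦X⟧) * map (Int.castRingHom ℚ) (sigmaSeries ℤ) =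
      (q.wronskian p : ℚ[X]) := by
    rw [map_sigmaSeries, mul_comm, Polynomial.coe_mul,
      (d⁄dX ℚ).mul_mul_eq_of_apply_eq_mul derivative_theta hqp, Polynomial.wronskian,
      Polynomial.coe_sub, Polynomial.coe_mul, Polynomial.coe_mul, derivative_coe, derivative_coe]
  obtain ⟨B, A, hB, hBA⟩ :=
    exists_int_mul_eq_coe_of_rat_mul_eq_coe (by simp [Polynomial.mul_coeff_zero, hp, hq]) hrat
  obtain ⟨ℓ, hℓ, hper⟩ := exists_prime_eventuallyPeriodic_coeff hB hBA
  exact not_eventuallyPeriodic_sigma_succ hℓ (by simpa [sigmaSeries] using hper)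
end

section
/- Let c : ℕ → ℤ be a sequence such that for every m ≥ 1 and every prime p dividing m one has c_m ≡ c_{m/p} (mod p^{ord_p(m)}), where ord_p(m) is the exponent of p in m. Then for every n ≥ 1, n divides Σ_{d|n} μ(n/d)·c_d·2^d, where μ is the Möbius function and the sum runs over the positive divisors d of n. -/
/-!
Write `n = p ^ k * m` with `p ∤ m` and `k ≥ 1`. By multiplicativity of `μ`, and because `μ (p ^ i)`
vanishes for `i ≥ 2`, the Möbius sum `∑_{d ∣ n} μ d * a (n / d)` collapses to
`∑_{e ∣ m} μ e * (a (n / e) - a (n / (p * e)))`. Each bracket is `a M - a (M / p)` with `p ^ k ∣ M`,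
so it is divisible by `p ^ k` as soon as `a m ≡ a (m / p) [ZMOD p ^ ord_p m]` for all `m`.
This congruence holds for `m ↦ b ^ m` (Fermat's little theorem lifted along `p`-th powers)
and is preserved by products, so it holds for `m ↦ c m * 2 ^ m`.
-/

open Finset ArithmeticFunction
open scoped ArithmeticFunction.Moebius

def GaussCongruent (a : ℕ → ℤ) : Prop :=
  ∀ m : ℕ, 1 ≤ m → ∀ p : ℕ, p.Prime → p ∣ m →
    a m ≡ a (m / p) [ZMOD (p : ℤ) ^ (m.factorization p)]

theorem Nat.Coprime.sum_divisors_mul_eq_sum_sum {M : Type*} [AddCommMonoid M] {m n : ℕ}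
    (hmn : m.Coprime n) (f : ℕ → M) :
    ∑ d ∈ (m * n).divisors, f d = ∑ i ∈ m.divisors, ∑ j ∈ n.divisors, f (i * j) := by
  rw [Nat.divisors_mul, Finset.mul_def, sum_image hmn.mul_injOn_divisors, sum_product]

theorem sum_divisors_prime_pow_moebius_mul {p k : ℕ} (hp : p.Prime) (hk : k ≠ 0) (F : ℕ → ℤ) :
    ∑ i ∈ (p ^ k).divisors, (μ i : ℤ) * F i = F 1 - F p := by
  obtain ⟨k, rfl⟩ := Nat.exists_eq_add_one_of_ne_zero hk
  have hvanish : ∀ j ∈ range k, (μ (p ^ (j + 2)) : ℤ) * F (p ^ (j + 2)) = 0 := fun j _ => by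
    rw [moebius_apply_prime_pow hp (by omega), if_neg (by omega)]
    simp
  rw [Nat.sum_divisors_prime_pow hp, sum_range_succ', sum_range_succ', sum_eq_zero hvanish]
  simp [moebius_apply_prime hp]
  ring

theorem sum_divisors_moebius_mul_eq_of_coprime {p k m : ℕ} (hp : p.Prime) (hk : k ≠ 0)
    (hpm : (p ^ k).Coprime m) (f : ℕ → ℤ) :
    ∑ d ∈ (p ^ k * m).divisors, (μ d : ℤ) * f d
      = ∑ e ∈ m.divisors, (μ e : ℤ) * (f e - f (p * e)) := by
  rw [hpm.sum_divisors_mul_eq_sum_sum, sum_comm]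
  refine sum_congr rfl fun e he => ?_
  have hcop : ∀ i ∈ (p ^ k).divisors, i.Coprime e := fun i hi =>
    hpm.coprime_dvd_left (Nat.dvd_of_mem_divisors hi)
      |>.coprime_dvd_right (Nat.dvd_of_mem_divisors he)
  calc ∑ i ∈ (p ^ k).divisors, (μ (i * e) : ℤ) * f (i * e)
      = (μ e : ℤ) * ∑ i ∈ (p ^ k).divisors, (μ i : ℤ) * f (i * e) := by
        rw [mul_sum]
        refine sum_congr rfl fun i hi => ?_
        rw [isMultiplicative_moebius.map_mul_of_coprime (hcop i hi)]
        ring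
    _ = (μ e : ℤ) * (f e - f (p * e)) := by
        rw [sum_divisors_prime_pow_moebius_mul hp hk, one_mul]

theorem gaussCongruent_pow (b : ℤ) : GaussCongruent (b ^ ·) := by
  intro m hm p hp hpm
  obtain ⟨k, hk⟩ : ∃ k, m.factorization p = k + 1 :=
    Nat.exists_eq_add_one_of_ne_zero (hp.factorization_pos_of_dvd (by omega) hpm).ne'
  obtain ⟨e, hm_eq⟩ : ∃ e, m = p ^ (k + 1) * e :=
    ⟨_, by rw [← hk]; exact (Nat.ordProj_mul_ordCompl_eq_self m p).symm⟩
  have hmp : m / p = p ^ k * e := by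
    rw [hm_eq, pow_succ', mul_assoc, Nat.mul_div_cancel_left _ hp.pos]
  -- Fermat gives `p ∣ (b ^ e) ^ p - b ^ e`, and raising to the power `p ^ k` gains a factor `p ^ k`.
  have key := dvd_sub_pow_of_dvd_sub (Int.prime_dvd_pow_self_sub hp (b ^ e)) k
  rw [← pow_mul, ← pow_mul, ← pow_mul, show e * (p * p ^ k) = m by rw [hm_eq]; ring,
    show e * p ^ k = m / p by rw [hmp]; ring] at key
  rw [hk]
  exact (Int.modEq_iff_dvd.mpr key).symm

namespace GaussCongruent

variable {a : ℕ → ℤ}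

theorem mul {b : ℕ → ℤ} (ha : GaussCongruent a) (hb : GaussCongruent b) :
    GaussCongruent (fun m => a m * b m) :=
  fun m hm p hp hpm => (ha m hm p hp hpm).mul (hb m hm p hp hpm)

theorem modEq_div_prime (ha : GaussCongruent a) {p k M : ℕ} (hp : p.Prime) (hk : k ≠ 0)
    (hM : M ≠ 0) (hpk : p ^ k ∣ M) : a M ≡ a (M / p) [ZMOD (p : ℤ) ^ k] := by
  have hle : k ≤ M.factorization p := (hp.pow_dvd_iff_le_factorization hM).mp hpk
  exact (ha M (by omega) p hp ((dvd_pow_self p hk).trans hpk)).of_dvd (pow_dvd_pow _ hle)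

theorem prime_pow_factorization_dvd_sum_moebius (ha : GaussCongruent a) {p n : ℕ}
    (hp : p.Prime) (hn : n ≠ 0) :
    (p : ℤ) ^ n.factorization p ∣ ∑ d ∈ n.divisors, (μ (n / d) : ℤ) * a d := by
  set k := n.factorization p
  rcases eq_or_ne k 0 with hk | hk
  · simp [hk]
  set m := n / p ^ k
  have hnm : p ^ k * m = n := Nat.ordProj_mul_ordCompl_eq_self n p
  have hflip : ∑ d ∈ n.divisors, (μ (n / d) : ℤ) * a d
      = ∑ d ∈ n.divisors, (μ d : ℤ) * a (n / d) := by
    rw [← Nat.sum_div_divisors]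
    refine sum_congr rfl fun d hd => ?_
    rw [Nat.div_div_self (Nat.dvd_of_mem_divisors hd) hn]
  rw [hflip, ← hnm, sum_divisors_moebius_mul_eq_of_coprime hp hk
    ((Nat.coprime_ordCompl hp hn).pow_left k)]
  refine dvd_sum fun e he => Dvd.dvd.mul_left ?_ _
  have hem := Nat.dvd_of_mem_divisors he
  have hne : p ^ k * m / e = p ^ k * (m / e) := Nat.mul_div_assoc _ hem
  have hne0 : p ^ k * (m / e) ≠ 0 :=
    mul_ne_zero (pow_ne_zero _ hp.ne_zero) <| Nat.div_ne_zero_iff_of_dvd hem |>.mpr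
      ⟨(Nat.mem_divisors.mp he).2, (Nat.pos_of_mem_divisors he).ne'⟩
  rw [mul_comm p e, ← Nat.div_div_eq_div_mul, hne]
  exact (ha.modEq_div_prime hp hk hne0 (dvd_mul_right _ _)).symm.dvd

theorem natCast_dvd_sum_moebius (ha : GaussCongruent a) {n : ℕ} (hn : n ≠ 0) :
    (n : ℤ) ∣ ∑ d ∈ n.divisors, (μ (n / d) : ℤ) * a d := by
  rw [Int.natCast_dvd, Nat.dvd_iff_prime_pow_dvd_dvd]
  intro p k hp hpk
  have hle : k ≤ n.factorization p := (hp.pow_dvd_iff_le_factorization hn).mp hpk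
  exact (pow_dvd_pow p hle).trans
    (Int.natCast_dvd.mp (by exact_mod_cast ha.prime_pow_factorization_dvd_sum_moebius hp hn))

end GaussCongruent

theorem statement19 (c : ℕ → ℤ)
    (hc : ∀ m : ℕ, 1 ≤ m → ∀ p : ℕ, p.Prime → p ∣ m →
      c m ≡ c (m / p) [ZMOD (p : ℤ) ^ (m.factorization p)]) :
    ∀ n : ℕ, 1 ≤ n →
      (n : ℤ) ∣ ∑ d ∈ n.divisors,
        (ArithmeticFunction.moebius (n / d) : ℤ) * c d * 2 ^ d := by
  intro n hn
  have hc2 : GaussCongruent (fun d => c d * 2 ^ d) := GaussCongruent.mul hc (gaussCongruent_pow 2)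
  simpa only [mul_assoc] using hc2.natCast_dvd_sum_moebius (n := n) (by omega)
end
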